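/- arXiv:1601.00097 — 10 statements merged into one kernel-verified Lean document; each statement's English description precedes it below -/
import Mathlib

section
/- Let k ≥ 1 and let M be a k×k matrix all of whose entries are positive integers, satisfying M² = 5M. Then, up to the permutation action, M is one of the following sixteen matrices: N1 = (5); N2 = [[4,1],[4,1]]; N3 = [[4,4],[1,1]]; N4 = [[4,2],[2,1]]; N5 = [[3,6],[1,2]]; N6 = [[3,3],[2,2]]; N7 = [[3,2],[3,2]]; N8 = [[3,1],[6,2]]; N9 = [[3,1,1],[3,1,1],[3,1,1]]; N10 = [[3,3,3],[1,1,1],[1,1,1]]; N11 = [[2,2,2],[2,2,2],[1,1,1]]; N12 = [[2,4,2],[1,2,1],[1,2,1]]; N13 = [[2,2,1],[2,2,1],[2,2,1]]; N14 = the 5×5 all-ones matrix; N15 = the 4×4 matrix whose first column entries are all 2 and all other entries are 1; N16 = the 4×4 matrix whose first row entries are all 2 and all other entries are 1. That is, there is a k×k permutation matrix P with P·M·P⁻¹ equal to one of N1,…,N16. -/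
open Matrix Finset

lemma mulEq (x y n : ℤ) (hx : 1 ≤ x) (hy : 1 ≤ y) (hn : x * y = n) (hn6 : n ≤ 6) :
    (x = 1 ∧ y = n) ∨ (x = 2 ∧ 2 * y = n) ∨ (x = 3 ∧ 3 * y = n) ∨
    (x = 4 ∧ 4 * y = n) ∨ (x = 5 ∧ 5 * y = n) ∨ (x = 6 ∧ 6 * y = n) := by
  have hxn : x ≤ 6 := by nlinarith
  interval_cases x <;> omega

lemma key_cross (k : ℕ) (hk : 1 ≤ k) (M : Matrix (Fin k) (Fin k) ℤ)
    (hpos : ∀ i j, 1 ≤ M i j)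
    (heig : ∀ i j, ∑ l, M i l * M l j = 5 * M i j) :
    ∀ i i' j j', M i j * M i' j' = M i j' * M i' j := by
  have hpos' : ∀ i j, (0:ℤ) < M i j := fun i j => lt_of_lt_of_le one_pos (hpos i j)
  have main : ∀ j j', ∃ p, ∀ l, M l j * M p j' = M p j * M l j' := by
    intro j j'
    obtain ⟨p, -, hp⟩ := Finset.exists_min_image Finset.univ
      (fun l => (M l j : ℚ) / (M l j')) ⟨⟨0, hk⟩, Finset.mem_univ _⟩
    refine ⟨p, ?_⟩
    have hprop : ∀ l, M p j * M l j' ≤ M l j * M p j' := by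
      intro l
      have h := hp l (Finset.mem_univ l)
      rw [div_le_div_iff₀ (by exact_mod_cast hpos' p j') (by exact_mod_cast hpos' l j')] at h
      exact_mod_cast h
    have hsum : ∑ l, M p l * (M l j * M p j' - M p j * M l j') = 0 := by
      have h1 := heig p j; have h2 := heig p j'
      have : ∑ l, M p l * (M l j * M p j' - M p j * M l j')
          = (∑ l, M p l * M l j) * M p j' - M p j * (∑ l, M p l * M l j') := by
        rw [Finset.sum_mul, Finset.mul_sum, ← Finset.sum_sub_distrib]
        exact Finset.sum_congr rfl (fun l _ => by ring)
      rw [this, h1, h2]; ring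
    have hzero := (Finset.sum_eq_zero_iff_of_nonneg (fun l _ =>
      mul_nonneg (le_of_lt (hpos' p l)) (by linarith [hprop l]))).mp hsum
    intro l
    have := hzero l (Finset.mem_univ l)
    have hne : M p l ≠ 0 := ne_of_gt (hpos' p l)
    rcases mul_eq_zero.mp this with h | h
    · exact absurd h hne
    · linarith
  intro i i' j j'
  obtain ⟨p, hp⟩ := main j j'
  have h1 := hp i
  have h2 := hp i'
  have key : (M i j * M i' j') * (M p j * M p j') = (M i j' * M i' j) * (M p j * M p j') := by
    linear_combination (M i' j' * M p j) * h1 - (M i j' * M p j) * h2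
  exact mul_right_cancel₀ (ne_of_gt (mul_pos (hpos' p j) (hpos' p j'))) key

lemma helper1 (M : Matrix (Fin 1) (Fin 1) ℤ)
    (htr : M 0 0 = 5) :
    (∃ e : Fin 1 ≃ Fin 1, Matrix.reindex e e M = !![5]) := by
  refine ⟨Equiv.refl _, ?_⟩
  ext i j
  fin_cases i <;> fin_cases j <;> simp_all

lemma helper2 (M : Matrix (Fin 2) (Fin 2) ℤ)
    (hpos : ∀ i j, 1 ≤ M i j)
    (hcross : ∀ i i' j j', M i j * M i' j' = M i j' * M i' j)
    (htr : M 0 0 + M 1 1 = 5) :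
    (∃ e : Fin 2 ≃ Fin 2, Matrix.reindex e e M = !![4, 1; 4, 1]) ∨
    (∃ e : Fin 2 ≃ Fin 2, Matrix.reindex e e M = !![4, 4; 1, 1]) ∨
    (∃ e : Fin 2 ≃ Fin 2, Matrix.reindex e e M = !![4, 2; 2, 1]) ∨
    (∃ e : Fin 2 ≃ Fin 2, Matrix.reindex e e M = !![3, 6; 1, 2]) ∨
    (∃ e : Fin 2 ≃ Fin 2, Matrix.reindex e e M = !![3, 3; 2, 2]) ∨
    (∃ e : Fin 2 ≃ Fin 2, Matrix.reindex e e M = !![3, 2; 3, 2]) ∨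
    (∃ e : Fin 2 ≃ Fin 2, Matrix.reindex e e M = !![3, 1; 6, 2]) := by
  have hbc : M 0 1 * M 1 0 = M 0 0 * M 1 1 := hcross 0 1 1 0
  have h00 := hpos 0 0; have h01 := hpos 0 1; have h10 := hpos 1 0; have h11 := hpos 1 1
  -- enumerate
  have hdiag : (M 0 0 = 1 ∧ M 1 1 = 4) ∨ (M 0 0 = 2 ∧ M 1 1 = 3) ∨
      (M 0 0 = 3 ∧ M 1 1 = 2) ∨ (M 0 0 = 4 ∧ M 1 1 = 1) := by omega
  rcases hdiag with ⟨ha, hd⟩ | ⟨ha, hd⟩ | ⟨ha, hd⟩ | ⟨ha, hd⟩ <;>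
    rw [ha, hd] at hbc
  · -- diag (1,4)
    rcases mulEq _ _ _ h01 h10 hbc (by norm_num) with ⟨hb,hc⟩|⟨hb,hc⟩|⟨hb,hc⟩|⟨hb,hc⟩|⟨hb,hc⟩|⟨hb,hc⟩ <;>
      [skip; skip; omega; skip; omega; omega]
    · have hc' : M 1 0 = 4 := by omega
      refine Or.inr (Or.inl ⟨Equiv.swap 0 1, ?_⟩)
      ext i j
      fin_cases i <;> fin_cases j <;>
        simp_all [Matrix.reindex_apply, Equiv.swap_apply_def]
    · have hc' : M 1 0 = 2 := by omega
      refine Or.inr (Or.inr (Or.inl ⟨Equiv.swap 0 1, ?_⟩))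
      ext i j
      fin_cases i <;> fin_cases j <;>
        simp_all [Matrix.reindex_apply, Equiv.swap_apply_def]
    · have hc' : M 1 0 = 1 := by omega
      refine Or.inl ⟨Equiv.swap 0 1, ?_⟩
      ext i j
      fin_cases i <;> fin_cases j <;>
        simp_all [Matrix.reindex_apply, Equiv.swap_apply_def]
  · -- diag (2,3)
    rcases mulEq _ _ _ h01 h10 hbc (by norm_num) with ⟨hb,hc⟩|⟨hb,hc⟩|⟨hb,hc⟩|⟨hb,hc⟩|⟨hb,hc⟩|⟨hb,hc⟩ <;>
      [skip; skip; skip; omega; omega; skip]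
    · have hc' : M 1 0 = 6 := by omega
      refine Or.inr (Or.inr (Or.inr (Or.inl ⟨Equiv.swap 0 1, ?_⟩)))
      ext i j
      fin_cases i <;> fin_cases j <;>
        simp_all [Matrix.reindex_apply, Equiv.swap_apply_def]
    · have hc' : M 1 0 = 3 := by omega
      refine Or.inr (Or.inr (Or.inr (Or.inr (Or.inl ⟨Equiv.swap 0 1, ?_⟩))))
      ext i j
      fin_cases i <;> fin_cases j <;>
        simp_all [Matrix.reindex_apply, Equiv.swap_apply_def]
    · have hc' : M 1 0 = 2 := by omega
      refine Or.inr (Or.inr (Or.inr (Or.inr (Or.inr (Or.inl ⟨Equiv.swap 0 1, ?_⟩)))))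
      ext i j
      fin_cases i <;> fin_cases j <;>
        simp_all [Matrix.reindex_apply, Equiv.swap_apply_def]
    · have hc' : M 1 0 = 1 := by omega
      refine Or.inr (Or.inr (Or.inr (Or.inr (Or.inr (Or.inr (⟨Equiv.swap 0 1, ?_⟩))))))
      ext i j
      fin_cases i <;> fin_cases j <;>
        simp_all [Matrix.reindex_apply, Equiv.swap_apply_def]
  · -- diag (3,2)
    rcases mulEq _ _ _ h01 h10 hbc (by norm_num) with ⟨hb,hc⟩|⟨hb,hc⟩|⟨hb,hc⟩|⟨hb,hc⟩|⟨hb,hc⟩|⟨hb,hc⟩ <;>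
      [skip; skip; skip; omega; omega; skip]
    · have hc' : M 1 0 = 6 := by omega
      refine Or.inr (Or.inr (Or.inr (Or.inr (Or.inr (Or.inr (⟨Equiv.refl _, ?_⟩))))))
      ext i j
      fin_cases i <;> fin_cases j <;>
        simp_all [Matrix.reindex_apply, Equiv.swap_apply_def]
    · have hc' : M 1 0 = 3 := by omega
      refine Or.inr (Or.inr (Or.inr (Or.inr (Or.inr (Or.inl ⟨Equiv.refl _, ?_⟩)))))
      ext i j
      fin_cases i <;> fin_cases j <;>
        simp_all [Matrix.reindex_apply, Equiv.swap_apply_def]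
    · have hc' : M 1 0 = 2 := by omega
      refine Or.inr (Or.inr (Or.inr (Or.inr (Or.inl ⟨Equiv.refl _, ?_⟩))))
      ext i j
      fin_cases i <;> fin_cases j <;>
        simp_all [Matrix.reindex_apply, Equiv.swap_apply_def]
    · have hc' : M 1 0 = 1 := by omega
      refine Or.inr (Or.inr (Or.inr (Or.inl ⟨Equiv.refl _, ?_⟩)))
      ext i j
      fin_cases i <;> fin_cases j <;>
        simp_all [Matrix.reindex_apply, Equiv.swap_apply_def]
  · -- diag (4,1)
    rcases mulEq _ _ _ h01 h10 hbc (by norm_num) with ⟨hb,hc⟩|⟨hb,hc⟩|⟨hb,hc⟩|⟨hb,hc⟩|⟨hb,hc⟩|⟨hb,hc⟩ <;>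
      [skip; skip; omega; skip; omega; omega]
    · have hc' : M 1 0 = 4 := by omega
      refine Or.inl ⟨Equiv.refl _, ?_⟩
      ext i j
      fin_cases i <;> fin_cases j <;>
        simp_all [Matrix.reindex_apply, Equiv.swap_apply_def]
    · have hc' : M 1 0 = 2 := by omega
      refine Or.inr (Or.inr (Or.inl ⟨Equiv.refl _, ?_⟩))
      ext i j
      fin_cases i <;> fin_cases j <;>
        simp_all [Matrix.reindex_apply, Equiv.swap_apply_def]
    · have hc' : M 1 0 = 1 := by omega
      refine Or.inr (Or.inl ⟨Equiv.refl _, ?_⟩)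
      ext i j
      fin_cases i <;> fin_cases j <;>
        simp_all [Matrix.reindex_apply, Equiv.swap_apply_def]

set_option maxHeartbeats 1600000 in
lemma helper3 (M : Matrix (Fin 3) (Fin 3) ℤ)
    (hpos : ∀ i j, 1 ≤ M i j)
    (hcross : ∀ i i' j j', M i j * M i' j' = M i j' * M i' j)
    (htr : M 0 0 + M 1 1 + M 2 2 = 5) :
    (∃ e : Fin 3 ≃ Fin 3, Matrix.reindex e e M = !![3, 1, 1; 3, 1, 1; 3, 1, 1]) ∨
    (∃ e : Fin 3 ≃ Fin 3, Matrix.reindex e e M = !![3, 3, 3; 1, 1, 1; 1, 1, 1]) ∨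
    (∃ e : Fin 3 ≃ Fin 3, Matrix.reindex e e M = !![2, 2, 2; 2, 2, 2; 1, 1, 1]) ∨
    (∃ e : Fin 3 ≃ Fin 3, Matrix.reindex e e M = !![2, 4, 2; 1, 2, 1; 1, 2, 1]) ∨
    (∃ e : Fin 3 ≃ Fin 3, Matrix.reindex e e M = !![2, 2, 1; 2, 2, 1; 2, 2, 1]) := by
  have h00 := hpos 0 0; have h11 := hpos 1 1; have h22 := hpos 2 2
  have hdiag : (M 0 0 = 3 ∧ M 1 1 = 1 ∧ M 2 2 = 1) ∨ (M 0 0 = 1 ∧ M 1 1 = 3 ∧ M 2 2 = 1) ∨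
      (M 0 0 = 1 ∧ M 1 1 = 1 ∧ M 2 2 = 3) ∨ (M 0 0 = 2 ∧ M 1 1 = 2 ∧ M 2 2 = 1) ∨
      (M 0 0 = 2 ∧ M 1 1 = 1 ∧ M 2 2 = 2) ∨ (M 0 0 = 1 ∧ M 1 1 = 2 ∧ M 2 2 = 2) := by
    have h01 := hcross 0 1 1 0; have h02 := hcross 0 2 2 0; have h12' := hcross 1 2 2 1
    have p01 := hpos 0 1; have p10 := hpos 1 0; have p02 := hpos 0 2
    have p20 := hpos 2 0; have p12 := hpos 1 2; have p21 := hpos 2 1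
    -- rule out a 4 on the diagonal is automatic from sum; rule out (3,2) patterns is automatic too
    omega
  rcases hdiag with ⟨d0, d1, d2⟩|⟨d0, d1, d2⟩|⟨d0, d1, d2⟩|⟨d0, d1, d2⟩|⟨d0, d1, d2⟩|⟨d0, d1, d2⟩
  · -- diag (3, 1, 1)
    have hqr : M 1 2 = 1 ∧ M 2 1 = 1 := by
      have h := hcross 1 2 2 1; rw [d1, d2] at h
      constructor <;> nlinarith [hpos 1 2, hpos 2 1]
    obtain ⟨hqr1, hqr2⟩ := hqr
    have hb : M 1 0 * M 0 1 = 1 * 3 := by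
      have h := hcross 1 0 0 1; rw [d1, d0] at h; linarith
    rcases mulEq _ _ _ (hpos 1 0) (hpos 0 1) hb (by norm_num) with ⟨h1,h2⟩|⟨h1,h2⟩|⟨h1,h2⟩|⟨h1,h2⟩|⟨h1,h2⟩|⟨h1,h2⟩ <;>
      [skip; omega; skip; omega; omega; omega]
    · -- M 1 0 = 1
      have h2' : M 0 1 = 3 := by omega
      have hrp : M 2 0 = 1 := by
        have h := hcross 2 1 0 1; rw [d1, hqr2, h1] at h; omega
      have hpr : M 0 2 = 3 := by
        have h := hcross 0 1 2 1; rw [d1, hqr1, h2'] at h; omega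
      clear hcross hpos htr h00 h11 h22
      refine Or.inr (Or.inl ⟨Equiv.refl (Fin 3), ?_⟩)
      ext i j
      fin_cases i <;> fin_cases j <;>
        simp_all [Matrix.reindex_apply, Equiv.symm_trans_apply, Equiv.swap_apply_def,
          Matrix.cons_val_two, Matrix.tail_cons, Matrix.vecHead, Matrix.vecTail, Function.comp]
    · -- M 1 0 = 3
      have h2' : M 0 1 = 1 := by omega
      have hrp : M 2 0 = 3 := by
        have h := hcross 2 1 0 1; rw [d1, hqr2, h1] at h; omega
      have hpr : M 0 2 = 1 := by
        have h := hcross 0 1 2 1; rw [d1, hqr1, h2'] at h; omega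
      clear hcross hpos htr h00 h11 h22
      refine Or.inl ⟨Equiv.refl (Fin 3), ?_⟩
      ext i j
      fin_cases i <;> fin_cases j <;>
        simp_all [Matrix.reindex_apply, Equiv.symm_trans_apply, Equiv.swap_apply_def,
          Matrix.cons_val_two, Matrix.tail_cons, Matrix.vecHead, Matrix.vecTail, Function.comp]
  · -- diag (1, 3, 1)
    have hqr : M 0 2 = 1 ∧ M 2 0 = 1 := by
      have h := hcross 0 2 2 0; rw [d0, d2] at h
      constructor <;> nlinarith [hpos 0 2, hpos 2 0]
    obtain ⟨hqr1, hqr2⟩ := hqr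
    have hb : M 0 1 * M 1 0 = 1 * 3 := by
      have h := hcross 0 1 1 0; rw [d0, d1] at h; linarith
    rcases mulEq _ _ _ (hpos 0 1) (hpos 1 0) hb (by norm_num) with ⟨h1,h2⟩|⟨h1,h2⟩|⟨h1,h2⟩|⟨h1,h2⟩|⟨h1,h2⟩|⟨h1,h2⟩ <;>
      [skip; omega; skip; omega; omega; omega]
    · -- M 0 1 = 1
      have h2' : M 1 0 = 3 := by omega
      have hrp : M 2 1 = 1 := by
        have h := hcross 2 0 1 0; rw [d0, hqr2, h1] at h; omega
      have hpr : M 1 2 = 3 := by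
        have h := hcross 1 0 2 0; rw [d0, hqr1, h2'] at h; omega
      clear hcross hpos htr h00 h11 h22
      refine Or.inr (Or.inl ⟨Equiv.swap (0:Fin 3) 1, ?_⟩)
      ext i j
      fin_cases i <;> fin_cases j <;>
        simp_all [Matrix.reindex_apply, Equiv.symm_trans_apply, Equiv.swap_apply_def,
          Matrix.cons_val_two, Matrix.tail_cons, Matrix.vecHead, Matrix.vecTail, Function.comp]
    · -- M 0 1 = 3
      have h2' : M 1 0 = 1 := by omega
      have hrp : M 2 1 = 3 := by
        have h := hcross 2 0 1 0; rw [d0, hqr2, h1] at h; omega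
      have hpr : M 1 2 = 1 := by
        have h := hcross 1 0 2 0; rw [d0, hqr1, h2'] at h; omega
      clear hcross hpos htr h00 h11 h22
      refine Or.inl ⟨Equiv.swap (0:Fin 3) 1, ?_⟩
      ext i j
      fin_cases i <;> fin_cases j <;>
        simp_all [Matrix.reindex_apply, Equiv.symm_trans_apply, Equiv.swap_apply_def,
          Matrix.cons_val_two, Matrix.tail_cons, Matrix.vecHead, Matrix.vecTail, Function.comp]
  · -- diag (1, 1, 3)
    have hqr : M 0 1 = 1 ∧ M 1 0 = 1 := by
      have h := hcross 0 1 1 0; rw [d0, d1] at h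
      constructor <;> nlinarith [hpos 0 1, hpos 1 0]
    obtain ⟨hqr1, hqr2⟩ := hqr
    have hb : M 0 2 * M 2 0 = 1 * 3 := by
      have h := hcross 0 2 2 0; rw [d0, d2] at h; linarith
    rcases mulEq _ _ _ (hpos 0 2) (hpos 2 0) hb (by norm_num) with ⟨h1,h2⟩|⟨h1,h2⟩|⟨h1,h2⟩|⟨h1,h2⟩|⟨h1,h2⟩|⟨h1,h2⟩ <;>
      [skip; omega; skip; omega; omega; omega]
    · -- M 0 2 = 1
      have h2' : M 2 0 = 3 := by omega
      have hrp : M 1 2 = 1 := by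
        have h := hcross 1 0 2 0; rw [d0, hqr2, h1] at h; omega
      have hpr : M 2 1 = 3 := by
        have h := hcross 2 0 1 0; rw [d0, hqr1, h2'] at h; omega
      clear hcross hpos htr h00 h11 h22
      refine Or.inr (Or.inl ⟨Equiv.swap (0:Fin 3) 2, ?_⟩)
      ext i j
      fin_cases i <;> fin_cases j <;>
        simp_all [Matrix.reindex_apply, Equiv.symm_trans_apply, Equiv.swap_apply_def,
          Matrix.cons_val_two, Matrix.tail_cons, Matrix.vecHead, Matrix.vecTail, Function.comp]
    · -- M 0 2 = 3
      have h2' : M 2 0 = 1 := by omega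
      have hrp : M 1 2 = 3 := by
        have h := hcross 1 0 2 0; rw [d0, hqr2, h1] at h; omega
      have hpr : M 2 1 = 1 := by
        have h := hcross 2 0 1 0; rw [d0, hqr1, h2'] at h; omega
      clear hcross hpos htr h00 h11 h22
      refine Or.inl ⟨Equiv.swap (0:Fin 3) 2, ?_⟩
      ext i j
      fin_cases i <;> fin_cases j <;>
        simp_all [Matrix.reindex_apply, Equiv.symm_trans_apply, Equiv.swap_apply_def,
          Matrix.cons_val_two, Matrix.tail_cons, Matrix.vecHead, Matrix.vecTail, Function.comp]
  · -- diag (2, 2, 1)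
    have hb : M 0 2 * M 2 0 = 2 * 1 := by
      have h := hcross 0 2 2 0; rw [d0, d2] at h; linarith
    have hb2 : M 1 2 * M 2 1 = 2 * 1 := by
      have h := hcross 1 2 2 1; rw [d1, d2] at h; linarith
    rcases mulEq _ _ _ (hpos 0 2) (hpos 2 0) hb (by norm_num) with ⟨h1,h2⟩|⟨h1,h2⟩|⟨h1,h2⟩|⟨h1,h2⟩|⟨h1,h2⟩|⟨h1,h2⟩ <;>
      [skip; skip; omega; omega; omega; omega]
    · -- M 0 2 = 1
      have h2' : M 2 0 = 2 := by omega
      rcases mulEq _ _ _ (hpos 1 2) (hpos 2 1) hb2 (by norm_num) with ⟨g1,g2⟩|⟨g1,g2⟩|⟨g1,g2⟩|⟨g1,g2⟩|⟨g1,g2⟩|⟨g1,g2⟩ <;>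
        [skip; skip; omega; omega; omega; omega]
      · -- M 1 2 = 1
        have g2' : M 2 1 = 2 := by omega
        have hqr : M 0 1 = 2 := by
          have h := hcross 0 2 1 2; rw [d2, h1, g2'] at h; omega
        have hrq : M 1 0 = 2 := by
          have h := hcross 1 2 0 2; rw [d2, g1, h2'] at h; omega
        clear hcross hpos htr h00 h11 h22
        refine Or.inr (Or.inr (Or.inr (Or.inr (⟨Equiv.refl (Fin 3), ?_⟩))))
        ext i j
        fin_cases i <;> fin_cases j <;>
          simp_all [Matrix.reindex_apply, Equiv.symm_trans_apply, Equiv.swap_apply_def,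
            Matrix.cons_val_two, Matrix.tail_cons, Matrix.vecHead, Matrix.vecTail, Function.comp]
      · -- M 1 2 = 2
        have g2' : M 2 1 = 1 := by omega
        have hqr : M 0 1 = 1 := by
          have h := hcross 0 2 1 2; rw [d2, h1, g2'] at h; omega
        have hrq : M 1 0 = 4 := by
          have h := hcross 1 2 0 2; rw [d2, g1, h2'] at h; omega
        clear hcross hpos htr h00 h11 h22
        refine Or.inr (Or.inr (Or.inr (Or.inl ⟨Equiv.swap (0:Fin 3) 1, ?_⟩)))
        ext i j
        fin_cases i <;> fin_cases j <;>
          simp_all [Matrix.reindex_apply, Equiv.symm_trans_apply, Equiv.swap_apply_def,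
            Matrix.cons_val_two, Matrix.tail_cons, Matrix.vecHead, Matrix.vecTail, Function.comp]
    · -- M 0 2 = 2
      have h2' : M 2 0 = 1 := by omega
      rcases mulEq _ _ _ (hpos 1 2) (hpos 2 1) hb2 (by norm_num) with ⟨g1,g2⟩|⟨g1,g2⟩|⟨g1,g2⟩|⟨g1,g2⟩|⟨g1,g2⟩|⟨g1,g2⟩ <;>
        [skip; skip; omega; omega; omega; omega]
      · -- M 1 2 = 1
        have g2' : M 2 1 = 2 := by omega
        have hqr : M 0 1 = 4 := by
          have h := hcross 0 2 1 2; rw [d2, h1, g2'] at h; omega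
        have hrq : M 1 0 = 1 := by
          have h := hcross 1 2 0 2; rw [d2, g1, h2'] at h; omega
        clear hcross hpos htr h00 h11 h22
        refine Or.inr (Or.inr (Or.inr (Or.inl ⟨Equiv.refl (Fin 3), ?_⟩)))
        ext i j
        fin_cases i <;> fin_cases j <;>
          simp_all [Matrix.reindex_apply, Equiv.symm_trans_apply, Equiv.swap_apply_def,
            Matrix.cons_val_two, Matrix.tail_cons, Matrix.vecHead, Matrix.vecTail, Function.comp]
      · -- M 1 2 = 2
        have g2' : M 2 1 = 1 := by omega
        have hqr : M 0 1 = 2 := by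
          have h := hcross 0 2 1 2; rw [d2, h1, g2'] at h; omega
        have hrq : M 1 0 = 2 := by
          have h := hcross 1 2 0 2; rw [d2, g1, h2'] at h; omega
        clear hcross hpos htr h00 h11 h22
        refine Or.inr (Or.inr (Or.inl ⟨Equiv.refl (Fin 3), ?_⟩))
        ext i j
        fin_cases i <;> fin_cases j <;>
          simp_all [Matrix.reindex_apply, Equiv.symm_trans_apply, Equiv.swap_apply_def,
            Matrix.cons_val_two, Matrix.tail_cons, Matrix.vecHead, Matrix.vecTail, Function.comp]
  · -- diag (2, 1, 2)
    have hb : M 0 1 * M 1 0 = 2 * 1 := by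
      have h := hcross 0 1 1 0; rw [d0, d1] at h; linarith
    have hb2 : M 2 1 * M 1 2 = 2 * 1 := by
      have h := hcross 2 1 1 2; rw [d2, d1] at h; linarith
    rcases mulEq _ _ _ (hpos 0 1) (hpos 1 0) hb (by norm_num) with ⟨h1,h2⟩|⟨h1,h2⟩|⟨h1,h2⟩|⟨h1,h2⟩|⟨h1,h2⟩|⟨h1,h2⟩ <;>
      [skip; skip; omega; omega; omega; omega]
    · -- M 0 1 = 1
      have h2' : M 1 0 = 2 := by omega
      rcases mulEq _ _ _ (hpos 2 1) (hpos 1 2) hb2 (by norm_num) with ⟨g1,g2⟩|⟨g1,g2⟩|⟨g1,g2⟩|⟨g1,g2⟩|⟨g1,g2⟩|⟨g1,g2⟩ <;>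
        [skip; skip; omega; omega; omega; omega]
      · -- M 2 1 = 1
        have g2' : M 1 2 = 2 := by omega
        have hqr : M 0 2 = 2 := by
          have h := hcross 0 1 2 1; rw [d1, h1, g2'] at h; omega
        have hrq : M 2 0 = 2 := by
          have h := hcross 2 1 0 1; rw [d1, g1, h2'] at h; omega
        clear hcross hpos htr h00 h11 h22
        refine Or.inr (Or.inr (Or.inr (Or.inr (⟨Equiv.swap (1:Fin 3) 2, ?_⟩))))
        ext i j
        fin_cases i <;> fin_cases j <;>
          simp_all [Matrix.reindex_apply, Equiv.symm_trans_apply, Equiv.swap_apply_def,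
            Matrix.cons_val_two, Matrix.tail_cons, Matrix.vecHead, Matrix.vecTail, Function.comp]
      · -- M 2 1 = 2
        have g2' : M 1 2 = 1 := by omega
        have hqr : M 0 2 = 1 := by
          have h := hcross 0 1 2 1; rw [d1, h1, g2'] at h; omega
        have hrq : M 2 0 = 4 := by
          have h := hcross 2 1 0 1; rw [d1, g1, h2'] at h; omega
        clear hcross hpos htr h00 h11 h22
        refine Or.inr (Or.inr (Or.inr (Or.inl ⟨(Equiv.swap (0:Fin 3) 1).trans (Equiv.swap 0 2), ?_⟩)))
        ext i j
        fin_cases i <;> fin_cases j <;>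
          simp_all [Matrix.reindex_apply, Equiv.symm_trans_apply, Equiv.swap_apply_def,
            Matrix.cons_val_two, Matrix.tail_cons, Matrix.vecHead, Matrix.vecTail, Function.comp]
    · -- M 0 1 = 2
      have h2' : M 1 0 = 1 := by omega
      rcases mulEq _ _ _ (hpos 2 1) (hpos 1 2) hb2 (by norm_num) with ⟨g1,g2⟩|⟨g1,g2⟩|⟨g1,g2⟩|⟨g1,g2⟩|⟨g1,g2⟩|⟨g1,g2⟩ <;>
        [skip; skip; omega; omega; omega; omega]
      · -- M 2 1 = 1
        have g2' : M 1 2 = 2 := by omega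
        have hqr : M 0 2 = 4 := by
          have h := hcross 0 1 2 1; rw [d1, h1, g2'] at h; omega
        have hrq : M 2 0 = 1 := by
          have h := hcross 2 1 0 1; rw [d1, g1, h2'] at h; omega
        clear hcross hpos htr h00 h11 h22
        refine Or.inr (Or.inr (Or.inr (Or.inl ⟨Equiv.swap (1:Fin 3) 2, ?_⟩)))
        ext i j
        fin_cases i <;> fin_cases j <;>
          simp_all [Matrix.reindex_apply, Equiv.symm_trans_apply, Equiv.swap_apply_def,
            Matrix.cons_val_two, Matrix.tail_cons, Matrix.vecHead, Matrix.vecTail, Function.comp]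
      · -- M 2 1 = 2
        have g2' : M 1 2 = 1 := by omega
        have hqr : M 0 2 = 2 := by
          have h := hcross 0 1 2 1; rw [d1, h1, g2'] at h; omega
        have hrq : M 2 0 = 2 := by
          have h := hcross 2 1 0 1; rw [d1, g1, h2'] at h; omega
        clear hcross hpos htr h00 h11 h22
        refine Or.inr (Or.inr (Or.inl ⟨Equiv.swap (1:Fin 3) 2, ?_⟩))
        ext i j
        fin_cases i <;> fin_cases j <;>
          simp_all [Matrix.reindex_apply, Equiv.symm_trans_apply, Equiv.swap_apply_def,
            Matrix.cons_val_two, Matrix.tail_cons, Matrix.vecHead, Matrix.vecTail, Function.comp]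
  · -- diag (1, 2, 2)
    have hb : M 1 0 * M 0 1 = 2 * 1 := by
      have h := hcross 1 0 0 1; rw [d1, d0] at h; linarith
    have hb2 : M 2 0 * M 0 2 = 2 * 1 := by
      have h := hcross 2 0 0 2; rw [d2, d0] at h; linarith
    rcases mulEq _ _ _ (hpos 1 0) (hpos 0 1) hb (by norm_num) with ⟨h1,h2⟩|⟨h1,h2⟩|⟨h1,h2⟩|⟨h1,h2⟩|⟨h1,h2⟩|⟨h1,h2⟩ <;>
      [skip; skip; omega; omega; omega; omega]
    · -- M 1 0 = 1
      have h2' : M 0 1 = 2 := by omega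
      rcases mulEq _ _ _ (hpos 2 0) (hpos 0 2) hb2 (by norm_num) with ⟨g1,g2⟩|⟨g1,g2⟩|⟨g1,g2⟩|⟨g1,g2⟩|⟨g1,g2⟩|⟨g1,g2⟩ <;>
        [skip; skip; omega; omega; omega; omega]
      · -- M 2 0 = 1
        have g2' : M 0 2 = 2 := by omega
        have hqr : M 1 2 = 2 := by
          have h := hcross 1 0 2 0; rw [d0, h1, g2'] at h; omega
        have hrq : M 2 1 = 2 := by
          have h := hcross 2 0 1 0; rw [d0, g1, h2'] at h; omega
        clear hcross hpos htr h00 h11 h22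
        refine Or.inr (Or.inr (Or.inr (Or.inr (⟨Equiv.swap (0:Fin 3) 2, ?_⟩))))
        ext i j
        fin_cases i <;> fin_cases j <;>
          simp_all [Matrix.reindex_apply, Equiv.symm_trans_apply, Equiv.swap_apply_def,
            Matrix.cons_val_two, Matrix.tail_cons, Matrix.vecHead, Matrix.vecTail, Function.comp]
      · -- M 2 0 = 2
        have g2' : M 0 2 = 1 := by omega
        have hqr : M 1 2 = 1 := by
          have h := hcross 1 0 2 0; rw [d0, h1, g2'] at h; omega
        have hrq : M 2 1 = 4 := by
          have h := hcross 2 0 1 0; rw [d0, g1, h2'] at h; omega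
        clear hcross hpos htr h00 h11 h22
        refine Or.inr (Or.inr (Or.inr (Or.inl ⟨Equiv.swap (0:Fin 3) 2, ?_⟩)))
        ext i j
        fin_cases i <;> fin_cases j <;>
          simp_all [Matrix.reindex_apply, Equiv.symm_trans_apply, Equiv.swap_apply_def,
            Matrix.cons_val_two, Matrix.tail_cons, Matrix.vecHead, Matrix.vecTail, Function.comp]
    · -- M 1 0 = 2
      have h2' : M 0 1 = 1 := by omega
      rcases mulEq _ _ _ (hpos 2 0) (hpos 0 2) hb2 (by norm_num) with ⟨g1,g2⟩|⟨g1,g2⟩|⟨g1,g2⟩|⟨g1,g2⟩|⟨g1,g2⟩|⟨g1,g2⟩ <;>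
        [skip; skip; omega; omega; omega; omega]
      · -- M 2 0 = 1
        have g2' : M 0 2 = 2 := by omega
        have hqr : M 1 2 = 4 := by
          have h := hcross 1 0 2 0; rw [d0, h1, g2'] at h; omega
        have hrq : M 2 1 = 1 := by
          have h := hcross 2 0 1 0; rw [d0, g1, h2'] at h; omega
        clear hcross hpos htr h00 h11 h22
        refine Or.inr (Or.inr (Or.inr (Or.inl ⟨(Equiv.swap (0:Fin 3) 2).trans (Equiv.swap 0 1), ?_⟩)))
        ext i j
        fin_cases i <;> fin_cases j <;>
          simp_all [Matrix.reindex_apply, Equiv.symm_trans_apply, Equiv.swap_apply_def,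
            Matrix.cons_val_two, Matrix.tail_cons, Matrix.vecHead, Matrix.vecTail, Function.comp]
      · -- M 2 0 = 2
        have g2' : M 0 2 = 1 := by omega
        have hqr : M 1 2 = 2 := by
          have h := hcross 1 0 2 0; rw [d0, h1, g2'] at h; omega
        have hrq : M 2 1 = 2 := by
          have h := hcross 2 0 1 0; rw [d0, g1, h2'] at h; omega
        clear hcross hpos htr h00 h11 h22
        refine Or.inr (Or.inr (Or.inl ⟨Equiv.swap (0:Fin 3) 2, ?_⟩))
        ext i j
        fin_cases i <;> fin_cases j <;>
          simp_all [Matrix.reindex_apply, Equiv.symm_trans_apply, Equiv.swap_apply_def,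
            Matrix.cons_val_two, Matrix.tail_cons, Matrix.vecHead, Matrix.vecTail, Function.comp]

set_option maxHeartbeats 1600000 in
lemma helper4 (M : Matrix (Fin 4) (Fin 4) ℤ)
    (hpos : ∀ i j, 1 ≤ M i j)
    (hcross : ∀ i i' j j', M i j * M i' j' = M i j' * M i' j)
    (htr : M 0 0 + M 1 1 + M 2 2 + M 3 3 = 5) :
    (∃ e : Fin 4 ≃ Fin 4, Matrix.reindex e e M = !![2, 1, 1, 1; 2, 1, 1, 1; 2, 1, 1, 1; 2, 1, 1, 1]) ∨
    (∃ e : Fin 4 ≃ Fin 4, Matrix.reindex e e M = !![2, 2, 2, 2; 1, 1, 1, 1; 1, 1, 1, 1; 1, 1, 1, 1]) := by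
  have h00 := hpos 0 0; have h11 := hpos 1 1; have h22 := hpos 2 2; have h33 := hpos 3 3
  have hdiag : (M 0 0 = 2 ∧ M 1 1 = 1 ∧ M 2 2 = 1 ∧ M 3 3 = 1) ∨
      (M 0 0 = 1 ∧ M 1 1 = 2 ∧ M 2 2 = 1 ∧ M 3 3 = 1) ∨
      (M 0 0 = 1 ∧ M 1 1 = 1 ∧ M 2 2 = 2 ∧ M 3 3 = 1) ∨
      (M 0 0 = 1 ∧ M 1 1 = 1 ∧ M 2 2 = 1 ∧ M 3 3 = 2) := by omega
  rcases hdiag with ⟨d0, d1, d2, d3⟩|⟨d0, d1, d2, d3⟩|⟨d0, d1, d2, d3⟩|⟨d0, d1, d2, d3⟩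
  · -- 2 at position 0
    have e12 : M 1 2 = 1 ∧ M 2 1 = 1 := by
      have h := hcross 1 2 2 1; rw [d1, d2] at h
      constructor <;> nlinarith [hpos 1 2, hpos 2 1]
    obtain ⟨e12a, e12b⟩ := e12
    have e13 : M 1 3 = 1 ∧ M 3 1 = 1 := by
      have h := hcross 1 3 3 1; rw [d1, d3] at h
      constructor <;> nlinarith [hpos 1 3, hpos 3 1]
    obtain ⟨e13a, e13b⟩ := e13
    have e23 : M 2 3 = 1 ∧ M 3 2 = 1 := by
      have h := hcross 2 3 3 2; rw [d2, d3] at h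
      constructor <;> nlinarith [hpos 2 3, hpos 3 2]
    obtain ⟨e23a, e23b⟩ := e23
    have c2 : M 2 0 = M 1 0 := by
      have h := hcross 2 1 0 1; rw [d1, e12b] at h; omega
    have c3 : M 3 0 = M 1 0 := by
      have h := hcross 3 1 0 1; rw [d1, e13b] at h; omega
    have r2 : M 0 2 = M 0 1 := by
      have h := hcross 0 1 2 1; rw [d1, e12a] at h; omega
    have r3 : M 0 3 = M 0 1 := by
      have h := hcross 0 1 3 1; rw [d1, e13a] at h; omega
    have hb : M 1 0 * M 0 1 = 1 * 2 := by
      have h := hcross 1 0 0 1; rw [d1, d0] at h; linarith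
    rcases mulEq _ _ _ (hpos 1 0) (hpos 0 1) hb (by norm_num) with ⟨h1,h2⟩|⟨h1,h2⟩|⟨h1,h2⟩|⟨h1,h2⟩|⟨h1,h2⟩|⟨h1,h2⟩ <;>
      [skip; skip; omega; omega; omega; omega]
    · -- col entry 1
      have h2' : M 0 1 = 2 := by omega
      clear hcross hpos htr h00 h11 h22 h33
      refine Or.inr (⟨Equiv.refl (Fin 4), ?_⟩)
      ext i j
      fin_cases i <;> fin_cases j <;>
        simp_all [Matrix.reindex_apply, Equiv.symm_trans_apply, Equiv.swap_apply_def,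
          Matrix.cons_val_two, Matrix.tail_cons, Matrix.vecHead, Matrix.vecTail, Function.comp,
          Matrix.cons_val_three]
    · -- col entry 2
      have h2' : M 0 1 = 1 := by omega
      clear hcross hpos htr h00 h11 h22 h33
      refine Or.inl ⟨Equiv.refl (Fin 4), ?_⟩
      ext i j
      fin_cases i <;> fin_cases j <;>
        simp_all [Matrix.reindex_apply, Equiv.symm_trans_apply, Equiv.swap_apply_def,
          Matrix.cons_val_two, Matrix.tail_cons, Matrix.vecHead, Matrix.vecTail, Function.comp,
          Matrix.cons_val_three]
  · -- 2 at position 1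
    have e02 : M 0 2 = 1 ∧ M 2 0 = 1 := by
      have h := hcross 0 2 2 0; rw [d0, d2] at h
      constructor <;> nlinarith [hpos 0 2, hpos 2 0]
    obtain ⟨e02a, e02b⟩ := e02
    have e03 : M 0 3 = 1 ∧ M 3 0 = 1 := by
      have h := hcross 0 3 3 0; rw [d0, d3] at h
      constructor <;> nlinarith [hpos 0 3, hpos 3 0]
    obtain ⟨e03a, e03b⟩ := e03
    have e23 : M 2 3 = 1 ∧ M 3 2 = 1 := by
      have h := hcross 2 3 3 2; rw [d2, d3] at h
      constructor <;> nlinarith [hpos 2 3, hpos 3 2]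
    obtain ⟨e23a, e23b⟩ := e23
    have c2 : M 2 1 = M 0 1 := by
      have h := hcross 2 0 1 0; rw [d0, e02b] at h; omega
    have c3 : M 3 1 = M 0 1 := by
      have h := hcross 3 0 1 0; rw [d0, e03b] at h; omega
    have r2 : M 1 2 = M 1 0 := by
      have h := hcross 1 0 2 0; rw [d0, e02a] at h; omega
    have r3 : M 1 3 = M 1 0 := by
      have h := hcross 1 0 3 0; rw [d0, e03a] at h; omega
    have hb : M 0 1 * M 1 0 = 1 * 2 := by
      have h := hcross 0 1 1 0; rw [d0, d1] at h; linarith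
    rcases mulEq _ _ _ (hpos 0 1) (hpos 1 0) hb (by norm_num) with ⟨h1,h2⟩|⟨h1,h2⟩|⟨h1,h2⟩|⟨h1,h2⟩|⟨h1,h2⟩|⟨h1,h2⟩ <;>
      [skip; skip; omega; omega; omega; omega]
    · -- col entry 1
      have h2' : M 1 0 = 2 := by omega
      clear hcross hpos htr h00 h11 h22 h33
      refine Or.inr (⟨Equiv.swap (0:Fin 4) 1, ?_⟩)
      ext i j
      fin_cases i <;> fin_cases j <;>
        simp_all [Matrix.reindex_apply, Equiv.symm_trans_apply, Equiv.swap_apply_def,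
          Matrix.cons_val_two, Matrix.tail_cons, Matrix.vecHead, Matrix.vecTail, Function.comp,
          Matrix.cons_val_three]
    · -- col entry 2
      have h2' : M 1 0 = 1 := by omega
      clear hcross hpos htr h00 h11 h22 h33
      refine Or.inl ⟨Equiv.swap (0:Fin 4) 1, ?_⟩
      ext i j
      fin_cases i <;> fin_cases j <;>
        simp_all [Matrix.reindex_apply, Equiv.symm_trans_apply, Equiv.swap_apply_def,
          Matrix.cons_val_two, Matrix.tail_cons, Matrix.vecHead, Matrix.vecTail, Function.comp,
          Matrix.cons_val_three]
  · -- 2 at position 2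
    have e01 : M 0 1 = 1 ∧ M 1 0 = 1 := by
      have h := hcross 0 1 1 0; rw [d0, d1] at h
      constructor <;> nlinarith [hpos 0 1, hpos 1 0]
    obtain ⟨e01a, e01b⟩ := e01
    have e03 : M 0 3 = 1 ∧ M 3 0 = 1 := by
      have h := hcross 0 3 3 0; rw [d0, d3] at h
      constructor <;> nlinarith [hpos 0 3, hpos 3 0]
    obtain ⟨e03a, e03b⟩ := e03
    have e13 : M 1 3 = 1 ∧ M 3 1 = 1 := by
      have h := hcross 1 3 3 1; rw [d1, d3] at h
      constructor <;> nlinarith [hpos 1 3, hpos 3 1]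
    obtain ⟨e13a, e13b⟩ := e13
    have c2 : M 1 2 = M 0 2 := by
      have h := hcross 1 0 2 0; rw [d0, e01b] at h; omega
    have c3 : M 3 2 = M 0 2 := by
      have h := hcross 3 0 2 0; rw [d0, e03b] at h; omega
    have r2 : M 2 1 = M 2 0 := by
      have h := hcross 2 0 1 0; rw [d0, e01a] at h; omega
    have r3 : M 2 3 = M 2 0 := by
      have h := hcross 2 0 3 0; rw [d0, e03a] at h; omega
    have hb : M 0 2 * M 2 0 = 1 * 2 := by
      have h := hcross 0 2 2 0; rw [d0, d2] at h; linarith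
    rcases mulEq _ _ _ (hpos 0 2) (hpos 2 0) hb (by norm_num) with ⟨h1,h2⟩|⟨h1,h2⟩|⟨h1,h2⟩|⟨h1,h2⟩|⟨h1,h2⟩|⟨h1,h2⟩ <;>
      [skip; skip; omega; omega; omega; omega]
    · -- col entry 1
      have h2' : M 2 0 = 2 := by omega
      clear hcross hpos htr h00 h11 h22 h33
      refine Or.inr (⟨Equiv.swap (0:Fin 4) 2, ?_⟩)
      ext i j
      fin_cases i <;> fin_cases j <;>
        simp_all [Matrix.reindex_apply, Equiv.symm_trans_apply, Equiv.swap_apply_def,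
          Matrix.cons_val_two, Matrix.tail_cons, Matrix.vecHead, Matrix.vecTail, Function.comp,
          Matrix.cons_val_three]
    · -- col entry 2
      have h2' : M 2 0 = 1 := by omega
      clear hcross hpos htr h00 h11 h22 h33
      refine Or.inl ⟨Equiv.swap (0:Fin 4) 2, ?_⟩
      ext i j
      fin_cases i <;> fin_cases j <;>
        simp_all [Matrix.reindex_apply, Equiv.symm_trans_apply, Equiv.swap_apply_def,
          Matrix.cons_val_two, Matrix.tail_cons, Matrix.vecHead, Matrix.vecTail, Function.comp,
          Matrix.cons_val_three]
  · -- 2 at position 3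
    have e01 : M 0 1 = 1 ∧ M 1 0 = 1 := by
      have h := hcross 0 1 1 0; rw [d0, d1] at h
      constructor <;> nlinarith [hpos 0 1, hpos 1 0]
    obtain ⟨e01a, e01b⟩ := e01
    have e02 : M 0 2 = 1 ∧ M 2 0 = 1 := by
      have h := hcross 0 2 2 0; rw [d0, d2] at h
      constructor <;> nlinarith [hpos 0 2, hpos 2 0]
    obtain ⟨e02a, e02b⟩ := e02
    have e12 : M 1 2 = 1 ∧ M 2 1 = 1 := by
      have h := hcross 1 2 2 1; rw [d1, d2] at h
      constructor <;> nlinarith [hpos 1 2, hpos 2 1]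
    obtain ⟨e12a, e12b⟩ := e12
    have c2 : M 1 3 = M 0 3 := by
      have h := hcross 1 0 3 0; rw [d0, e01b] at h; omega
    have c3 : M 2 3 = M 0 3 := by
      have h := hcross 2 0 3 0; rw [d0, e02b] at h; omega
    have r2 : M 3 1 = M 3 0 := by
      have h := hcross 3 0 1 0; rw [d0, e01a] at h; omega
    have r3 : M 3 2 = M 3 0 := by
      have h := hcross 3 0 2 0; rw [d0, e02a] at h; omega
    have hb : M 0 3 * M 3 0 = 1 * 2 := by
      have h := hcross 0 3 3 0; rw [d0, d3] at h; linarith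
    rcases mulEq _ _ _ (hpos 0 3) (hpos 3 0) hb (by norm_num) with ⟨h1,h2⟩|⟨h1,h2⟩|⟨h1,h2⟩|⟨h1,h2⟩|⟨h1,h2⟩|⟨h1,h2⟩ <;>
      [skip; skip; omega; omega; omega; omega]
    · -- col entry 1
      have h2' : M 3 0 = 2 := by omega
      clear hcross hpos htr h00 h11 h22 h33
      refine Or.inr (⟨Equiv.swap (0:Fin 4) 3, ?_⟩)
      ext i j
      fin_cases i <;> fin_cases j <;>
        simp_all [Matrix.reindex_apply, Equiv.symm_trans_apply, Equiv.swap_apply_def,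
          Matrix.cons_val_two, Matrix.tail_cons, Matrix.vecHead, Matrix.vecTail, Function.comp,
          Matrix.cons_val_three]
    · -- col entry 2
      have h2' : M 3 0 = 1 := by omega
      clear hcross hpos htr h00 h11 h22 h33
      refine Or.inl ⟨Equiv.swap (0:Fin 4) 3, ?_⟩
      ext i j
      fin_cases i <;> fin_cases j <;>
        simp_all [Matrix.reindex_apply, Equiv.symm_trans_apply, Equiv.swap_apply_def,
          Matrix.cons_val_two, Matrix.tail_cons, Matrix.vecHead, Matrix.vecTail, Function.comp,
          Matrix.cons_val_three]

lemma helper5 (M : Matrix (Fin 5) (Fin 5) ℤ)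
    (hpos : ∀ i j, 1 ≤ M i j)
    (hcross : ∀ i i' j j', M i j * M i' j' = M i j' * M i' j)
    (hdub : ∀ i, M i i ≤ 1) :
    (∃ e : Fin 5 ≃ Fin 5, Matrix.reindex e e M =
      !![1, 1, 1, 1, 1; 1, 1, 1, 1, 1; 1, 1, 1, 1, 1; 1, 1, 1, 1, 1; 1, 1, 1, 1, 1]) := by
  have hd : ∀ i : Fin 5, M i i = 1 := fun i => le_antisymm (hdub i) (hpos i i)
  have hone : ∀ i j, M i j = 1 := by
    intro i j
    have h := hcross i j j i
    rw [hd i, hd j] at h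
    nlinarith [hpos i j, hpos j i]
  refine ⟨Equiv.refl (Fin 5), ?_⟩
  ext i j
  fin_cases i <;> fin_cases j <;>
    simp [Matrix.reindex_apply, hone, Matrix.cons_val_two, Matrix.tail_cons,
      Matrix.vecHead, Matrix.vecTail, Function.comp, Matrix.cons_val_three] <;> try rfl

/-- Any square matrix `M` with positive integer entries satisfying `M² = 5M` is,
up to simultaneous permutation of rows and columns (i.e. conjugation by a permutation
matrix), one of the sixteen matrices `N₁, …, N₁₆`. -/
theorem integer_matrices_sq_eq_five_mul (k : ℕ) (hk : 1 ≤ k)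
    (M : Matrix (Fin k) (Fin k) ℤ)
    (hpos : ∀ i j, 1 ≤ M i j)
    (hM : M * M = (5 : ℤ) • M) :
    (∃ e : Fin k ≃ Fin 1, Matrix.reindex e e M = !![5]) ∨
    (∃ e : Fin k ≃ Fin 2, Matrix.reindex e e M = !![4, 1; 4, 1]) ∨
    (∃ e : Fin k ≃ Fin 2, Matrix.reindex e e M = !![4, 4; 1, 1]) ∨
    (∃ e : Fin k ≃ Fin 2, Matrix.reindex e e M = !![4, 2; 2, 1]) ∨
    (∃ e : Fin k ≃ Fin 2, Matrix.reindex e e M = !![3, 6; 1, 2]) ∨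
    (∃ e : Fin k ≃ Fin 2, Matrix.reindex e e M = !![3, 3; 2, 2]) ∨
    (∃ e : Fin k ≃ Fin 2, Matrix.reindex e e M = !![3, 2; 3, 2]) ∨
    (∃ e : Fin k ≃ Fin 2, Matrix.reindex e e M = !![3, 1; 6, 2]) ∨
    (∃ e : Fin k ≃ Fin 3, Matrix.reindex e e M = !![3, 1, 1; 3, 1, 1; 3, 1, 1]) ∨
    (∃ e : Fin k ≃ Fin 3, Matrix.reindex e e M = !![3, 3, 3; 1, 1, 1; 1, 1, 1]) ∨
    (∃ e : Fin k ≃ Fin 3, Matrix.reindex e e M = !![2, 2, 2; 2, 2, 2; 1, 1, 1]) ∨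
    (∃ e : Fin k ≃ Fin 3, Matrix.reindex e e M = !![2, 4, 2; 1, 2, 1; 1, 2, 1]) ∨
    (∃ e : Fin k ≃ Fin 3, Matrix.reindex e e M = !![2, 2, 1; 2, 2, 1; 2, 2, 1]) ∨
    (∃ e : Fin k ≃ Fin 5, Matrix.reindex e e M =
      !![1, 1, 1, 1, 1; 1, 1, 1, 1, 1; 1, 1, 1, 1, 1; 1, 1, 1, 1, 1; 1, 1, 1, 1, 1]) ∨
    (∃ e : Fin k ≃ Fin 4, Matrix.reindex e e M =
      !![2, 1, 1, 1; 2, 1, 1, 1; 2, 1, 1, 1; 2, 1, 1, 1]) ∨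
    (∃ e : Fin k ≃ Fin 4, Matrix.reindex e e M =
      !![2, 2, 2, 2; 1, 1, 1, 1; 1, 1, 1, 1; 1, 1, 1, 1]) := by
  have heig : ∀ i j, ∑ l, M i l * M l j = 5 * M i j := by
    intro i j
    have := congrFun (congrFun hM i) j
    simpa [Matrix.mul_apply, Matrix.smul_apply] using this
  have hcross := key_cross k hk M hpos heig
  have hpos' : ∀ i j, (0:ℤ) < M i j := fun i j => lt_of_lt_of_le one_pos (hpos i j)
  have p0 : Fin k := ⟨0, hk⟩
  have htr : ∑ i, M i i = 5 := by
    have hc : (∑ i, M i i) * M p0 p0 = 5 * M p0 p0 := by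
      calc (∑ i, M i i) * M p0 p0 = ∑ i, M i i * M p0 p0 := Finset.sum_mul _ _ _
        _ = ∑ i, M p0 i * M i p0 := Finset.sum_congr rfl (fun i _ => by
            rw [hcross i p0 i p0]; ring)
        _ = 5 * M p0 p0 := heig p0 p0
    exact mul_right_cancel₀ (ne_of_gt (hpos' p0 p0)) hc
  have hk5 : k ≤ 5 := by
    have h1 : (k : ℤ) ≤ ∑ i : Fin k, M i i := by
      calc (k : ℤ) = ∑ _i : Fin k, (1:ℤ) := by simp
        _ ≤ ∑ i, M i i := Finset.sum_le_sum (fun i _ => hpos i i)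
    rw [htr] at h1
    exact_mod_cast h1
  have hdub : ∀ i, M i i + ((k:ℤ) - 1) ≤ 5 := by
    intro i
    have hsplit : M i i + ∑ j ∈ Finset.univ.erase i, M j j = ∑ j, M j j :=
      by simpa using Finset.add_sum_erase Finset.univ (fun j => M j j) (Finset.mem_univ i)
    have hge : ((k:ℤ) - 1) ≤ ∑ j ∈ Finset.univ.erase i, M j j := by
      have hcard : (Finset.univ.erase i).card = k - 1 := by
        simp [Finset.card_erase_of_mem]
      have hs := Finset.card_nsmul_le_sum (Finset.univ.erase i) (fun j => M j j) 1
        (fun j _ => hpos j j)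
      rw [hcard] at hs
      have : ((k - 1 : ℕ) : ℤ) = (k:ℤ) - 1 := by omega
      simpa [nsmul_eq_mul, this] using hs
    rw [htr] at hsplit
    linarith
  interval_cases k
  · -- k = 1
    left
    rw [Fin.sum_univ_one] at htr
    exact helper1 M htr
  · -- k = 2
    rw [Fin.sum_univ_two] at htr
    rcases helper2 M hpos hcross htr with h|h|h|h|h|h|h
    · exact Or.inr (Or.inl h)
    · exact Or.inr (Or.inr (Or.inl h))
    · exact Or.inr (Or.inr (Or.inr (Or.inl h)))
    · exact Or.inr (Or.inr (Or.inr (Or.inr (Or.inl h))))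
    · exact Or.inr (Or.inr (Or.inr (Or.inr (Or.inr (Or.inl h)))))
    · exact Or.inr (Or.inr (Or.inr (Or.inr (Or.inr (Or.inr (Or.inl h))))))
    · exact Or.inr (Or.inr (Or.inr (Or.inr (Or.inr (Or.inr (Or.inr (Or.inl h)))))))
  · -- k = 3
    rw [Fin.sum_univ_three] at htr
    rcases helper3 M hpos hcross htr with h|h|h|h|h
    · exact Or.inr (Or.inr (Or.inr (Or.inr (Or.inr (Or.inr (Or.inr (Or.inr (Or.inl h))))))))
    · exact Or.inr (Or.inr (Or.inr (Or.inr (Or.inr (Or.inr (Or.inr (Or.inr (Or.inr (Or.inl h)))))))))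
    · exact Or.inr (Or.inr (Or.inr (Or.inr (Or.inr (Or.inr (Or.inr (Or.inr (Or.inr (Or.inr (Or.inl h))))))))))
    · exact Or.inr (Or.inr (Or.inr (Or.inr (Or.inr (Or.inr (Or.inr (Or.inr (Or.inr (Or.inr (Or.inr (Or.inl h)))))))))))
    · exact Or.inr (Or.inr (Or.inr (Or.inr (Or.inr (Or.inr (Or.inr (Or.inr (Or.inr (Or.inr (Or.inr (Or.inr (Or.inl h))))))))))))
  · -- k = 4
    rw [Fin.sum_univ_four] at htr
    rcases helper4 M hpos hcross htr with h|h
    · exact Or.inr (Or.inr (Or.inr (Or.inr (Or.inr (Or.inr (Or.inr (Or.inr (Or.inr (Or.inr (Or.inr (Or.inr (Or.inr (Or.inr (Or.inl h))))))))))))))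
    · exact Or.inr (Or.inr (Or.inr (Or.inr (Or.inr (Or.inr (Or.inr (Or.inr (Or.inr (Or.inr (Or.inr (Or.inr (Or.inr (Or.inr (Or.inr h))))))))))))))
  · -- k = 5
    have h := helper5 M hpos hcross (fun i => by have := hdub i; omega)
    exact Or.inr (Or.inr (Or.inr (Or.inr (Or.inr (Or.inr (Or.inr (Or.inr (Or.inr (Or.inr (Or.inr (Or.inr (Or.inr (Or.inl h)))))))))))))
end

section
/- Let k ≥ 1 and let M be a k×k matrix all of whose entries are positive integers, satisfying M² = 5M. Then M, viewed as a matrix over the rationals, has rank one, the trace of M equals 5, and k ≤ 5. -/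
/-- If `M` is a `k×k` matrix with positive integer entries satisfying `M² = 5M`, then `M`
has rank one over `ℚ`, trace `5`, and `k ≤ 5`. -/
theorem rank_trace_of_sq_eq_five_mul (k : ℕ) (hk : 1 ≤ k)
    (M : Matrix (Fin k) (Fin k) ℤ)
    (hpos : ∀ i j, 1 ≤ M i j)
    (hM : M * M = (5 : ℤ) • M) :
    (M.map (Int.cast : ℤ → ℚ)).rank = 1 ∧ M.trace = 5 ∧ k ≤ 5 := by
  set A : Matrix (Fin k) (Fin k) ℚ := M.map (Int.cast : ℤ → ℚ) with hAdef
  have hApos : ∀ i j, (1:ℚ) ≤ A i j := by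
    intro i j
    have := hpos i j
    simp only [hAdef, Matrix.map_apply]
    exact_mod_cast this
  have hA0 : ∀ i j, (0:ℚ) < A i j := fun i j => lt_of_lt_of_le zero_lt_one (hApos i j)
  have hmul : ∀ i j, ∑ l, A i l * A l j = 5 * A i j := by
    intro i j
    have h1 := congrFun (congrFun hM i) j
    rw [Matrix.mul_apply, Matrix.smul_apply] at h1
    have h2 : ((∑ l, M i l * M l j : ℤ) : ℚ) = ((5 * M i j : ℤ) : ℚ) := by
      rw [h1]; norm_num
    push_cast at h2
    simpa [hAdef, Matrix.map_apply] using h2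
  -- key Perron-type lemma: all columns are proportional
  have key : ∀ j j' : Fin k, ∃ t : ℚ, ∀ i, A i j' = t * A i j := by
    intro j j'
    have hne : (Finset.univ : Finset (Fin k)).Nonempty := ⟨⟨0, hk⟩, Finset.mem_univ _⟩
    obtain ⟨i₀, -, hmin⟩ :=
      Finset.exists_min_image Finset.univ (fun i => A i j' / A i j) hne
    set t := A i₀ j' / A i₀ j with ht
    refine ⟨t, ?_⟩
    have hw : ∀ i, 0 ≤ A i j' - t * A i j := by
      intro i
      have h := hmin i (Finset.mem_univ i)
      have : t * A i j ≤ A i j' := by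
        rw [← le_div_iff₀ (hA0 i j)]; exact h
      linarith
    have hw0 : A i₀ j' - t * A i₀ j = 0 := by
      rw [ht, div_mul_cancel₀ _ (ne_of_gt (hA0 i₀ j))]; ring
    have hsum : ∑ l, A i₀ l * (A l j' - t * A l j) = 0 := by
      have e1 : ∑ l, A i₀ l * (A l j' - t * A l j)
          = (∑ l, A i₀ l * A l j') - t * ∑ l, A i₀ l * A l j := by
        rw [Finset.mul_sum, ← Finset.sum_sub_distrib]
        congr 1; ext l; ring
      rw [e1, hmul i₀ j', hmul i₀ j]
      rw [show (5:ℚ) * A i₀ j' - t * (5 * A i₀ j) = 5 * (A i₀ j' - t * A i₀ j) by ring,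
        hw0, mul_zero]
    have hzero : ∀ l ∈ Finset.univ, A i₀ l * (A l j' - t * A l j) = 0 := by
      rw [← Finset.sum_eq_zero_iff_of_nonneg]
      · exact hsum
      · intro l _
        exact mul_nonneg (le_of_lt (hA0 i₀ l)) (hw l)
    intro i
    have := hzero i (Finset.mem_univ i)
    rcases mul_eq_zero.mp this with h | h
    · exact absurd h (ne_of_gt (hA0 i₀ i))
    · linarith
  set z : Fin k := ⟨0, hk⟩ with hz
  choose t ht using fun j' => key z j'
  -- trace of A equals 5
  have htrA : A.trace = 5 := by
    have hAzz : (0:ℚ) < A z z := hA0 z z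
    have e : ∑ l, A z l * A l z = A z z * A.trace := by
      rw [Matrix.trace, Finset.mul_sum]
      congr 1; ext l
      rw [Matrix.diag_apply, ht l z, ht l l]
      ring
    have := hmul z z
    rw [e] at this
    have := mul_left_cancel₀ (ne_of_gt hAzz) (this.trans (by ring : (5:ℚ) * A z z = A z z * 5))
    exact this
  have htrM : M.trace = 5 := by
    have : ((M.trace : ℤ) : ℚ) = A.trace := by
      rw [Matrix.trace, Matrix.trace]
      push_cast
      congr 1
    rw [htrA] at this
    exact_mod_cast this
  -- k ≤ 5
  have hk5 : k ≤ 5 := by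
    have h1 : ((k:ℚ) * k) ≤ ∑ i : Fin k, ∑ l : Fin k, A i l * A l i := by
      have : ∀ i : Fin k, (k:ℚ) ≤ ∑ l : Fin k, A i l * A l i := by
        intro i
        calc (k:ℚ) = ∑ _l : Fin k, (1:ℚ) := by simp
          _ ≤ ∑ l : Fin k, A i l * A l i := by
              apply Finset.sum_le_sum
              intro l _
              have := mul_le_mul (hApos i l) (hApos l i) zero_le_one
                (le_of_lt (hA0 i l))
              linarith
      calc ((k:ℚ) * k) = ∑ _i : Fin k, (k:ℚ) := by simp [mul_comm]
        _ ≤ _ := Finset.sum_le_sum (fun i _ => this i)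
    have h2 : ∑ i : Fin k, ∑ l : Fin k, A i l * A l i = 25 := by
      have : ∑ i : Fin k, ∑ l : Fin k, A i l * A l i = ∑ i : Fin k, 5 * A i i := by
        congr 1; ext i; exact hmul i i
      rw [this, ← Finset.mul_sum]
      have : ∑ i : Fin k, A i i = A.trace := rfl
      rw [this, htrA]; norm_num
    have : ((k:ℚ) * k) ≤ 25 := by rw [← h2]; exact h1
    by_contra hcon
    push_neg at hcon
    have hk6 : (6:ℚ) ≤ (k:ℚ) := by exact_mod_cast hcon
    nlinarith
  -- rank
  have hrank : A.rank = 1 := by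
    set c : Fin k → ℚ := fun i => A i z with hc
    have hcne : c ≠ 0 := by
      intro h
      have := congrFun h z
      simp only [hc, Pi.zero_apply] at this
      exact absurd this (ne_of_gt (hA0 z z))
    have hrange : LinearMap.range A.mulVecLin = Submodule.span ℚ {c} := by
      apply le_antisymm
      · rintro x ⟨v, rfl⟩
        have : A.mulVecLin v = (∑ j, t j * v j) • c := by
          ext i
          simp only [Matrix.mulVecLin_apply, Matrix.mulVec, dotProduct, Pi.smul_apply,
            smul_eq_mul, hc]
          rw [Finset.sum_mul]
          refine Finset.sum_congr rfl fun j _ => ?_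
          rw [ht j i]; ring
        rw [this]
        exact Submodule.smul_mem _ _ (Submodule.mem_span_singleton_self c)
      · rw [Submodule.span_le, Set.singleton_subset_iff]
        refine ⟨Pi.single z 1, ?_⟩
        ext i
        simp [Matrix.mulVecLin_apply, Matrix.mulVec_single, hc]
    rw [Matrix.rank, hrange]
    exact finrank_span_singleton hcne
  exact ⟨hrank, htrM, hk5⟩
end

section
/- Let M11, M12, M21, M22 be nonzero 2×2 matrices with nonnegative integer entries which satisfy the composition relations of k(1→2) and such that M11 + M12 + M21 + M22 = [[2,1],[2,1]]. Then necessarily M11 = [[1,0],[0,0]], M12 = [[1,1],[0,0]], M21 = [[0,0],[1,0]], and M22 = [[0,0],[1,1]]. -/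
/-- If four nonzero `2×2` matrices with nonnegative integer entries satisfy the
composition relations of `k(1→2)` (in `Fin 2` indexing: `M_{ij} • M_{st} = 0` if
`(j,s) = (0,1)` and `M_{ij} • M_{st} = M_{it}` otherwise) and add up to
`[[2,1],[2,1]]`, then they are the explicit matrices below. -/
theorem proj_functor_matrices_quiver_A2_M2 (Mm : Fin 2 → Fin 2 → Matrix (Fin 2) (Fin 2) ℤ)
    (hnz : ∀ i j, Mm i j ≠ 0)
    (hnn : ∀ i j a b, 0 ≤ Mm i j a b)
    (hrel : ∀ i j s t : Fin 2,
      Mm i j * Mm s t = if j = 0 ∧ s = 1 then 0 else Mm i t)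
    (hsum : Mm 0 0 + Mm 0 1 + Mm 1 0 + Mm 1 1 = !![2, 1; 2, 1]) :
    Mm 0 0 = !![1, 0; 0, 0] ∧ Mm 0 1 = !![1, 1; 0, 0] ∧
    Mm 1 0 = !![0, 0; 1, 0] ∧ Mm 1 1 = !![0, 0; 1, 1] := by
  have hs00 := congrFun (congrFun hsum 0) 0
  have hs01 := congrFun (congrFun hsum 0) 1
  have hs10 := congrFun (congrFun hsum 1) 0
  have hs11 := congrFun (congrFun hsum 1) 1
  simp [Matrix.add_apply] at hs00 hs01 hs10 hs11
  have z1 := hrel 1 0 1 0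
  have z2 := hrel 0 0 1 0
  have e6 := hrel 1 0 0 1
  have e5 := hrel 1 0 0 0
  have e2 := hrel 1 1 1 1
  simp at z1 z2 e6 e5 e2
  have z100 := congrFun (congrFun z1 0) 0
  have z111 := congrFun (congrFun z1 1) 1
  have z200 := congrFun (congrFun z2 0) 0
  have z201 := congrFun (congrFun z2 0) 1
  have z210 := congrFun (congrFun z2 1) 0
  have z211 := congrFun (congrFun z2 1) 1
  have e600 := congrFun (congrFun e6 0) 0
  have e601 := congrFun (congrFun e6 0) 1
  have e610 := congrFun (congrFun e6 1) 0
  have e611 := congrFun (congrFun e6 1) 1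
  have e510 := congrFun (congrFun e5 1) 0
  have e200 := congrFun (congrFun e2 0) 0
  simp [Matrix.mul_apply, Fin.sum_univ_two] at z100 z111 z200 z201 z210 z211 e600 e601 e610 e611 e510 e200
  -- step 1: diagonal of M10 vanishes
  have hqrnn : 0 ≤ Mm 1 0 0 1 * Mm 1 0 1 0 := mul_nonneg (hnn 1 0 0 1) (hnn 1 0 1 0)
  have hp : Mm 1 0 0 0 = 0 :=
    mul_self_eq_zero.mp (le_antisymm (by linarith) (mul_self_nonneg _))
  have hs : Mm 1 0 1 1 = 0 := by
    have hrq : 0 ≤ Mm 1 0 1 0 * Mm 1 0 0 1 := mul_nonneg (hnn 1 0 1 0) (hnn 1 0 0 1)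
    exact mul_self_eq_zero.mp (le_antisymm (by linarith) (mul_self_nonneg _))
  simp only [hp, hs, mul_zero, zero_mul, add_zero, zero_add] at z100 z111 z200 z201 z210 z211 e600 e601 e610 e611 e510
  -- z100 : q * r = 0
  rcases mul_eq_zero.mp z100 with hq | hr
  · -- main case q = 0
    have hr : Mm 1 0 1 0 ≠ 0 := by
      intro h0
      apply hnz 1 0
      ext i j
      fin_cases i <;> fin_cases j <;> simp [hp, hq, hs, h0]
    simp only [hq, zero_mul, mul_zero] at z201 z211 e600 e601
    have hw : Mm 1 1 0 0 = 0 := e600.symm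
    have hx : Mm 1 1 0 1 = 0 := e601.symm
    have hb : Mm 0 0 0 1 = 0 := by
      rcases mul_eq_zero.mp z200 with h | h
      · exact h
      · exact absurd h hr
    have hd : Mm 0 0 1 1 = 0 := by
      rcases mul_eq_zero.mp z210 with h | h
      · exact h
      · exact absurd h hr
    have ha : Mm 0 0 0 0 = 1 := by
      have h0 : Mm 1 0 1 0 * (Mm 0 0 0 0 - 1) = 0 := by linear_combination e510
      rcases mul_eq_zero.mp h0 with h | h
      · exact absurd h hr
      · linarith
    have he : Mm 0 1 0 0 = 1 := by
      have := hnn 1 1 0 0; have := hnn 0 1 0 0; omega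
    have hf : Mm 0 1 0 1 = 1 := by
      have := hnn 0 1 0 1; omega
    rw [he, mul_one] at e610
    rw [hf, mul_one] at e611
    have hr1 : Mm 1 0 1 0 = 1 := by
      have := hnn 0 1 1 1
      have hrpos : 1 ≤ Mm 1 0 1 0 := lt_of_le_of_ne (hnn 1 0 1 0) (Ne.symm hr)
      omega
    have hc : Mm 0 0 1 0 = 0 := by
      have := hnn 0 1 1 0; have := hnn 0 0 1 0; omega
    have hg : Mm 0 1 1 0 = 0 := by have := hnn 0 1 1 0; omega
    have hh : Mm 0 1 1 1 = 0 := by have := hnn 0 1 1 1; omega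
    refine ⟨?_, ?_, ?_, ?_⟩ <;> ext i j <;> fin_cases i <;> fin_cases j <;>
      simp [ha, hb, hc, hd, he, hf, hg, hh, hp, hq, hr1, hs, hw, hx] <;> omega
  · -- case r = 0 : contradiction
    exfalso
    have hq : Mm 1 0 0 1 ≠ 0 := by
      intro h0
      apply hnz 1 0
      ext i j
      fin_cases i <;> fin_cases j <;> simp [hp, h0, hr, hs]
    have hq1 : Mm 1 0 0 1 = 1 := by
      have hqpos : 1 ≤ Mm 1 0 0 1 := lt_of_le_of_ne (hnn 1 0 0 1) (Ne.symm hq)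
      have := hnn 0 0 0 1; have := hnn 0 1 0 1; have := hnn 1 1 0 1
      omega
    have hb : Mm 0 0 0 1 = 0 := by
      have := hnn 0 0 0 1; have := hnn 0 1 0 1; have := hnn 1 1 0 1; omega
    have hf : Mm 0 1 0 1 = 0 := by
      have := hnn 0 0 0 1; have := hnn 0 1 0 1; have := hnn 1 1 0 1; omega
    have hx : Mm 1 1 0 1 = 0 := by
      have := hnn 0 0 0 1; have := hnn 0 1 0 1; have := hnn 1 1 0 1; omega
    simp only [hq1, hr, one_mul, mul_one, zero_mul, mul_zero] at z201 z211 e600 e601 e610 e611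
    -- z201 : a = 0, z211 : c = 0, e600 : g = w, e610 : 0 = y, e611 : 0 = z
    have hw : Mm 1 1 0 0 = Mm 0 1 1 0 := e600.symm
    have hy : Mm 1 1 1 0 = 0 := e610.symm
    have hz : Mm 1 1 1 1 = 0 := e611.symm
    have hg : Mm 0 1 1 0 ≠ 0 := by
      intro h0
      apply hnz 1 1
      ext i j
      fin_cases i <;> fin_cases j <;> simp [hw, hx, hy, hz, h0]
    have hg2 : Mm 0 1 1 0 = 2 := by
      have hgpos : 1 ≤ Mm 0 1 1 0 := lt_of_le_of_ne (hnn 0 1 1 0) (Ne.symm hg)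
      have := hnn 0 0 1 0; have := hnn 1 1 1 0; omega
    rw [hw, hg2, hx] at e200
    norm_num at e200
end

section
/- Let M11, M12, M21, M22 be nonzero 2×2 matrices with nonnegative integer entries which satisfy the composition relations of k(1→2) and such that M11 + M12 + M21 + M22 = [[2,2],[1,1]]. Then necessarily M11 = [[0,1],[0,1]], M12 = [[1,0],[1,0]], M21 = [[0,1],[0,0]], and M22 = [[1,0],[0,0]]. -/
set_option maxHeartbeats 4000000 in
lemma aux_A2 (a b c d e f g h p q r s t u v w : ℤ)
    (na : 0 ≤ a) (nb : 0 ≤ b) (nc : 0 ≤ c) (nd : 0 ≤ d)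
    (ne' : 0 ≤ e) (nf : 0 ≤ f) (ng : 0 ≤ g) (nh : 0 ≤ h)
    (np : 0 ≤ p) (nq : 0 ≤ q) (nr : 0 ≤ r) (ns : 0 ≤ s)
    (nt : 0 ≤ t) (nu : 0 ≤ u) (nv : 0 ≤ v) (nw : 0 ≤ w)
    (s1 : a + e + p + t = 2) (s2 : b + f + q + u = 2)
    (s3 : c + g + r + v = 1) (s4 : d + h + s + w = 1)
    (z1 : ¬(a = 0 ∧ b = 0 ∧ c = 0 ∧ d = 0))
    (z2 : ¬(e = 0 ∧ f = 0 ∧ g = 0 ∧ h = 0))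
    (z3 : ¬(p = 0 ∧ q = 0 ∧ r = 0 ∧ s = 0))
    (z4 : ¬(t = 0 ∧ u = 0 ∧ v = 0 ∧ w = 0))
    (r1 : p * e + q * g = t) (r2 : e * p + f * r = a)
    (r3 : p * f + q * h = u) (r4 : e * q + f * s = b)
    (r5 : p * u + q * w = 0) (r6 : g * b + h * d = d)
    (r7 : e * f + f * h = f) :
    a = 0 ∧ b = 1 ∧ c = 0 ∧ d = 1 ∧ e = 1 ∧ f = 0 ∧ g = 1 ∧ h = 0 ∧
    p = 0 ∧ q = 1 ∧ r = 0 ∧ s = 0 ∧ t = 1 ∧ u = 0 ∧ v = 0 ∧ w = 0 := by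
  have ba : a ≤ 2 := by omega
  have be : e ≤ 2 := by omega
  have bp : p ≤ 2 := by omega
  have bt : t ≤ 2 := by omega
  have bb : b ≤ 2 := by omega
  have bf : f ≤ 2 := by omega
  have bq : q ≤ 2 := by omega
  have bu : u ≤ 2 := by omega
  have bc : c ≤ 1 := by omega
  have bg : g ≤ 1 := by omega
  have br : r ≤ 1 := by omega
  have bv : v ≤ 1 := by omega
  have bd : d ≤ 1 := by omega
  have bh : h ≤ 1 := by omega
  have bs : s ≤ 1 := by omega
  have bw : w ≤ 1 := by omega
  interval_cases a <;> interval_cases e <;> interval_cases p <;> interval_cases t <;>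
    (try omega) <;>
  interval_cases b <;> interval_cases f <;> interval_cases q <;> interval_cases u <;>
    (try omega) <;>
  interval_cases c <;> interval_cases g <;> interval_cases r <;> interval_cases v <;>
    (try omega) <;>
  interval_cases d <;> interval_cases h <;> interval_cases s <;> interval_cases w <;>
    omega

set_option maxHeartbeats 4000000 in
/-- If four nonzero `2×2` matrices with nonnegative integer entries satisfy the
composition relations of `k(1→2)` (in `Fin 2` indexing: `M_{ij} • M_{st} = 0` if
`(j,s) = (0,1)` and `M_{ij} • M_{st} = M_{it}` otherwise) and add up to
`[[2,2],[1,1]]`, then they are the explicit matrices below. -/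
theorem proj_functor_matrices_quiver_A2_M3 (Mm : Fin 2 → Fin 2 → Matrix (Fin 2) (Fin 2) ℤ)
    (hnz : ∀ i j, Mm i j ≠ 0)
    (hnn : ∀ i j a b, 0 ≤ Mm i j a b)
    (hrel : ∀ i j s t : Fin 2,
      Mm i j * Mm s t = if j = 0 ∧ s = 1 then 0 else Mm i t)
    (hsum : Mm 0 0 + Mm 0 1 + Mm 1 0 + Mm 1 1 = !![2, 2; 1, 1]) :
    Mm 0 0 = !![0, 1; 0, 1] ∧ Mm 0 1 = !![1, 0; 1, 0] ∧
    Mm 1 0 = !![0, 1; 0, 0] ∧ Mm 1 1 = !![1, 0; 0, 0] := by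
  have key : ∀ i j s t a b : Fin 2,
      Mm i j a 0 * Mm s t 0 b + Mm i j a 1 * Mm s t 1 b
        = if j = 0 ∧ s = 1 then 0 else Mm i t a b := by
    intro i j s t a b
    have h := congrFun (congrFun (hrel i j s t) a) b
    rw [Matrix.mul_apply, Fin.sum_univ_two] at h
    rw [h]
    split <;> simp_all
  have hs : ∀ a b : Fin 2,
      Mm 0 0 a b + Mm 0 1 a b + Mm 1 0 a b + Mm 1 1 a b = !![(2:ℤ), 2; 1, 1] a b := by
    intro a b
    have h := congrFun (congrFun hsum a) b
    simpa using h
  have hz : ∀ i j, ¬(Mm i j 0 0 = 0 ∧ Mm i j 0 1 = 0 ∧ Mm i j 1 0 = 0 ∧ Mm i j 1 1 = 0) := by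
    intro i j ⟨h1, h2, h3, h4⟩
    apply hnz i j
    ext a b
    fin_cases a <;> fin_cases b <;> assumption
  have main := aux_A2 (Mm 0 0 0 0) (Mm 0 0 0 1) (Mm 0 0 1 0) (Mm 0 0 1 1)
      (Mm 0 1 0 0) (Mm 0 1 0 1) (Mm 0 1 1 0) (Mm 0 1 1 1)
      (Mm 1 0 0 0) (Mm 1 0 0 1) (Mm 1 0 1 0) (Mm 1 0 1 1)
      (Mm 1 1 0 0) (Mm 1 1 0 1) (Mm 1 1 1 0) (Mm 1 1 1 1)
      (hnn _ _ _ _) (hnn _ _ _ _) (hnn _ _ _ _) (hnn _ _ _ _)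
      (hnn _ _ _ _) (hnn _ _ _ _) (hnn _ _ _ _) (hnn _ _ _ _)
      (hnn _ _ _ _) (hnn _ _ _ _) (hnn _ _ _ _) (hnn _ _ _ _)
      (hnn _ _ _ _) (hnn _ _ _ _) (hnn _ _ _ _) (hnn _ _ _ _)
      (by simpa using hs 0 0) (by simpa using hs 0 1)
      (by simpa using hs 1 0) (by simpa using hs 1 1)
      (hz 0 0) (hz 0 1) (hz 1 0) (hz 1 1)
      (by simpa using key 1 0 0 1 0 0) (by simpa using key 0 1 1 0 0 0)
      (by simpa using key 1 0 0 1 0 1) (by simpa using key 0 1 1 0 0 1)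
      (by simpa using key 1 0 1 1 0 1) (by simpa using key 0 1 0 0 1 1)
      (by simpa using key 0 1 0 1 0 1)
  obtain ⟨e1, e2, e3, e4, e5, e6, e7, e8, e9, e10, e11, e12, e13, e14, e15, e16⟩ := main
  refine ⟨?_, ?_, ?_, ?_⟩ <;> (ext a b; fin_cases a <;> fin_cases b <;> simp_all)
end

section
/- Let M11, M12, M21, M22 be nonzero 3×3 matrices with nonnegative integer entries which satisfy the composition relations of k(1→2), whose sum M11 + M12 + M21 + M22 is the 3×3 all-ones matrix, and such that the diagonal of M11 is (1,0,0), the diagonal of M12 is (0,1,0), and the diagonal of M22 is (0,0,1). Then necessarily M11 = [[1,0,0],[1,0,0],[0,0,0]], M12 = [[0,1,1],[0,1,1],[0,0,0]], M21 = [[0,0,0],[0,0,0],[1,0,0]], and M22 = [[0,0,0],[0,0,0],[0,1,1]]. -/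
private lemma int_three_zero {x y z : ℤ} (hx : 0 ≤ x) (hy : 0 ≤ y) (hz : 0 ≤ z)
    (h : x + y + z = 0) : x = 0 ∧ y = 0 ∧ z = 0 :=
  ⟨by linarith, by linarith, by linarith⟩

private lemma int_mul_one {x y : ℤ} (hx : 0 ≤ x) (h : x * y = 1) : x = 1 ∧ y = 1 := by
  rcases Int.mul_eq_one_iff_eq_one_or_neg_one.mp h with ⟨h1, h2⟩ | ⟨h1, h2⟩
  · exact ⟨h1, h2⟩
  · omega

set_option maxHeartbeats 1000000 in
/-- If four nonzero `3×3` matrices with nonnegative integer entries satisfy the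
composition relations of `k(1→2)` (in `Fin 2` indexing: `M_{ij} • M_{st} = 0` if
`(j,s) = (0,1)` and `M_{ij} • M_{st} = M_{it}` otherwise), add up to the `3×3`
all-ones matrix, and have diagonals `(1,0,0)` (for `M₁₁`), `(0,1,0)` (for `M₁₂`) and
`(0,0,1)` (for `M₂₂`), then they are the explicit matrices below. -/
theorem proj_functor_matrices_quiver_A2_M6 (Mm : Fin 2 → Fin 2 → Matrix (Fin 3) (Fin 3) ℤ)
    (hnz : ∀ i j, Mm i j ≠ 0)
    (hnn : ∀ i j a b, 0 ≤ Mm i j a b)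
    (hrel : ∀ i j s t : Fin 2,
      Mm i j * Mm s t = if j = 0 ∧ s = 1 then 0 else Mm i t)
    (hsum : Mm 0 0 + Mm 0 1 + Mm 1 0 + Mm 1 1 = !![1, 1, 1; 1, 1, 1; 1, 1, 1])
    (hd11 : ∀ a, Mm 0 0 a a = ![1, 0, 0] a)
    (hd12 : ∀ a, Mm 0 1 a a = ![0, 1, 0] a)
    (hd22 : ∀ a, Mm 1 1 a a = ![0, 0, 1] a) :
    Mm 0 0 = !![1, 0, 0; 1, 0, 0; 0, 0, 0] ∧
    Mm 0 1 = !![0, 1, 1; 0, 1, 1; 0, 0, 0] ∧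
    Mm 1 0 = !![0, 0, 0; 0, 0, 0; 1, 0, 0] ∧
    Mm 1 1 = !![0, 0, 0; 0, 0, 0; 0, 1, 1] := by
  have E : ∀ {P Q R : Matrix (Fin 3) (Fin 3) ℤ}, P * Q = R → ∀ a b : Fin 3,
      P a 0 * Q 0 b + P a 1 * Q 1 b + P a 2 * Q 2 b = R a b := by
    intro P Q R h a b
    have h2 := congrFun (congrFun h a) b
    rwa [Matrix.mul_apply, Fin.sum_univ_three] at h2
  have hAC : Mm 0 0 * Mm 1 0 = 0 := by simpa using hrel 0 0 1 0
  have hAD : Mm 0 0 * Mm 1 1 = 0 := by simpa using hrel 0 0 1 1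
  have hCA : Mm 1 0 * Mm 0 0 = Mm 1 0 := by simpa using hrel 1 0 0 0
  have hBA : Mm 0 1 * Mm 0 0 = Mm 0 0 := by simpa using hrel 0 1 0 0
  have hBB : Mm 0 1 * Mm 0 1 = Mm 0 1 := by simpa using hrel 0 1 0 1
  have hBC : Mm 0 1 * Mm 1 0 = Mm 0 0 := by simpa using hrel 0 1 1 0
  have hDA : Mm 1 1 * Mm 0 0 = Mm 1 0 := by simpa using hrel 1 1 0 0
  have hDB : Mm 1 1 * Mm 0 1 = Mm 1 1 := by simpa using hrel 1 1 0 1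
  -- diagonal values
  have A00 : Mm 0 0 0 0 = 1 := by simpa using hd11 0
  have A11 : Mm 0 0 1 1 = 0 := by simpa using hd11 1
  have A22 : Mm 0 0 2 2 = 0 := by simpa using hd11 2
  have B00 : Mm 0 1 0 0 = 0 := by simpa using hd12 0
  have B11 : Mm 0 1 1 1 = 1 := by simpa using hd12 1
  have B22 : Mm 0 1 2 2 = 0 := by simpa using hd12 2
  have D00 : Mm 1 1 0 0 = 0 := by simpa using hd22 0
  have D11 : Mm 1 1 1 1 = 0 := by simpa using hd22 1
  have D22 : Mm 1 1 2 2 = 1 := by simpa using hd22 2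
  -- C diagonal from the sum
  have S : ∀ a b : Fin 3, Mm 0 0 a b + Mm 0 1 a b + Mm 1 0 a b + Mm 1 1 a b = 1 := by
    intro a b
    have h2 := congrFun (congrFun hsum a) b
    simp only [Matrix.add_apply] at h2
    fin_cases a <;> fin_cases b <;> simpa using h2
  have C00 : Mm 1 0 0 0 = 0 := by have := S 0 0; omega
  have C11 : Mm 1 0 1 1 = 0 := by have := S 1 1; omega
  have C22 : Mm 1 0 2 2 = 0 := by have := S 2 2; omega
  have pn : ∀ (i j s t : Fin 2) (a k b : Fin 3), 0 ≤ Mm i j a k * Mm s t k b :=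
    fun i j s t a k b => mul_nonneg (hnn i j a k) (hnn s t k b)
  -- 1. C01 = C02 = 0 from A*C = 0, row 0
  have C01 : Mm 1 0 0 1 = 0 := by
    have h := E hAC 0 1; simp only [Matrix.zero_apply] at h
    rw [A00, one_mul] at h
    exact (int_three_zero (hnn 1 0 0 1) (pn 0 0 1 0 0 1 1) (pn 0 0 1 0 0 2 1) h).1
  have C02 : Mm 1 0 0 2 = 0 := by
    have h := E hAC 0 2; simp only [Matrix.zero_apply] at h
    rw [A00, one_mul] at h
    exact (int_three_zero (hnn 1 0 0 2) (pn 0 0 1 0 0 1 2) (pn 0 0 1 0 0 2 2) h).1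
  -- 2. D01 = D02 = 0 from A*D = 0, row 0
  have D01 : Mm 1 1 0 1 = 0 := by
    have h := E hAD 0 1; simp only [Matrix.zero_apply] at h
    rw [A00, one_mul] at h
    exact (int_three_zero (hnn 1 1 0 1) (pn 0 0 1 1 0 1 1) (pn 0 0 1 1 0 2 1) h).1
  have D02 : Mm 1 1 0 2 = 0 := by
    have h := E hAD 0 2; simp only [Matrix.zero_apply] at h
    rw [A00, one_mul] at h
    exact (int_three_zero (hnn 1 1 0 2) (pn 0 0 1 1 0 1 2) (pn 0 0 1 1 0 2 2) h).1
  -- 3. A12 = 0 from (A*D)(1,2)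
  have A12 : Mm 0 0 1 2 = 0 := by
    have h := E hAD 1 2; simp only [Matrix.zero_apply] at h
    rw [D02, A11, D22, mul_zero, zero_mul, mul_one] at h
    linarith
  -- 4. B10 = 0 and B12*A20 = 0 from (B*A)(1,0)
  have h40 := E hBA 1 0
  rw [A00, B11, mul_one, one_mul] at h40
  have B10 : Mm 0 1 1 0 = 0 := by nlinarith [pn 0 1 0 0 1 2 0, hnn 0 1 1 0]
  have h41 : Mm 0 1 1 2 * Mm 0 0 2 0 = 0 := by nlinarith [pn 0 1 0 0 1 2 0, hnn 0 1 1 0]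
  -- 5. B20 = 0 from (B*B)(2,0)
  have B20 : Mm 0 1 2 0 = 0 := by
    have h := E hBB 2 0
    simp only [B00, B10, B22, zero_mul, mul_zero, zero_add, add_zero] at h
    linarith
  -- 6. A02 = 0 from (B*A)(0,2)
  have A02 : Mm 0 0 0 2 = 0 := by
    have h := E hBA 0 2
    simp only [B00, A12, A22, zero_mul, mul_zero, zero_add, add_zero] at h
    linarith
  -- 7. A21 = 0 from (B*C)(2,1)
  have A21 : Mm 0 0 2 1 = 0 := by
    have h := E hBC 2 1
    simp only [B20, C11, B22, zero_mul, mul_zero, zero_add, add_zero] at h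
    linarith
  -- 8. D10 = 0 from (D*B)(1,0)
  have D10 : Mm 1 1 1 0 = 0 := by
    have h := E hDB 1 0
    simp only [B00, B10, B20, zero_mul, mul_zero, zero_add, add_zero] at h
    linarith
  -- 9. D12 = 0 from (D*B)(1,2)
  have D12 : Mm 1 1 1 2 = 0 := by
    have h := E hDB 1 2
    simp only [D10, D11, B22, zero_mul, mul_zero, zero_add, add_zero] at h
    linarith
  -- 10. D20 = 0 from (D*B)(2,0)
  have D20 : Mm 1 1 2 0 = 0 := by
    have h := E hDB 2 0
    simp only [B00, B10, B20, zero_mul, mul_zero, zero_add, add_zero] at h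
    linarith
  -- 11. D21 = 1, B12 = 1 from (D*B)(2,2)
  have h11 := E hDB 2 2
  simp only [D20, B22, D22, zero_mul, mul_zero, zero_add, add_zero] at h11
  have D21 : Mm 1 1 2 1 = 1 := (int_mul_one (hnn 1 1 2 1) h11).1
  have B12 : Mm 0 1 1 2 = 1 := (int_mul_one (hnn 1 1 2 1) h11).2
  -- 12. B02 = B01 from (B*B)(0,2)
  have h12 := E hBB 0 2
  simp only [B00, B12, B22, zero_mul, mul_one, mul_zero, zero_add, add_zero] at h12
  -- 13. B21 = 0 from (B*B)(2,2)
  have B21 : Mm 0 1 2 1 = 0 := by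
    have h := E hBB 2 2
    simp only [B20, B12, B22, zero_mul, mul_one, mul_zero, zero_add, add_zero] at h
    linarith
  -- 14. A20 = 0 from (B*C)(2,0)
  have A20 : Mm 0 0 2 0 = 0 := by
    have h := E hBC 2 0
    simp only [B20, B21, B22, zero_mul, mul_zero, zero_add, add_zero] at h
    linarith
  -- 15. A10 = C20 from (D*A)(2,0)
  have h15 := E hDA 2 0
  simp only [D20, D21, D22, A20, zero_mul, mul_zero, one_mul, zero_add, add_zero] at h15
  -- 16. C21 = 0 from (D*A)(2,1)
  have C21 : Mm 1 0 2 1 = 0 := by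
    have h := E hDA 2 1
    simp only [D20, D21, D22, A11, A21, zero_mul, mul_zero, one_mul, zero_add, add_zero] at h
    linarith
  -- 17. A01 = 0 from (B*C)(0,1)
  have A01 : Mm 0 0 0 1 = 0 := by
    have h := E hBC 0 1
    simp only [B00, C11, C21, zero_mul, mul_zero, zero_add, add_zero] at h
    linarith
  -- 18. B01 = 1, A10 = 1 from (B*A)(0,0)
  have h18 := E hBA 0 0
  simp only [B00, A20, A00, zero_mul, mul_zero, zero_add, add_zero] at h18
  have B01 : Mm 0 1 0 1 = 1 := (int_mul_one (hnn 0 1 0 1) h18).1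
  have A10 : Mm 0 0 1 0 = 1 := (int_mul_one (hnn 0 1 0 1) h18).2
  have B02 : Mm 0 1 0 2 = 1 := by rw [← h12, B01]
  have C20 : Mm 1 0 2 0 = 1 := by rw [← h15, A10]
  -- 19. C10 = 0 from (B*C)(1,0)
  have C10 : Mm 1 0 1 0 = 0 := by
    have h := E hBC 1 0
    simp only [B10, B11, B12, C20, A10, zero_mul, mul_one, one_mul, zero_add, add_zero] at h
    linarith
  -- 20. C12 = 0 from (C*A)(1,2)
  have C12 : Mm 1 0 1 2 = 0 := by
    have h := E hCA 1 2
    simp only [C10, C11, A22, zero_mul, mul_zero, zero_add, add_zero] at h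
    linarith
  refine ⟨?_, ?_, ?_, ?_⟩ <;> ext a b <;> fin_cases a <;> fin_cases b <;>
    simp_all [Matrix.vecHead, Matrix.vecTail]
end

section
/- Let k ≥ 1 and let M_{ij}, for i,j ∈ {1,2,3}, be nine nonzero k×k matrices with nonnegative integer entries which satisfy the composition relations of k(1→2→3)/(βα), and assume that M := Σ_{i,j} M_{ij} has all entries positive and satisfies M² = 5M. Then: (i) all diagonal entries of M13, M21, M31 and M32 are zero; (ii) each of the matrices M11, M12, M22, M23 and M33 has exactly one diagonal entry equal to 1 and all its other diagonal entries equal to zero. -/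
private lemma diag_zero_of_trace_zero {k : ℕ} (P : Matrix (Fin k) (Fin k) ℤ)
    (hnn : ∀ a b, 0 ≤ P a b) (h : Matrix.trace P = 0) : ∀ a, P a a = 0 := by
  intro a
  have := (Finset.sum_eq_zero_iff_of_nonneg (fun i _ => hnn i i)).mp h a (Finset.mem_univ a)
  exact this

private lemma idem_diag {k : ℕ} (P : Matrix (Fin k) (Fin k) ℤ) (hnn : ∀ a b, 0 ≤ P a b)
    (hP : P * P = P) (a : Fin k) : P a a = 0 ∨ P a a = 1 := by
  have h : (P * P) a a = P a a := by rw [hP]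
  rw [Matrix.mul_apply] at h
  have h1 : P a a * P a a ≤ ∑ j, P a j * P j a :=
    Finset.single_le_sum (f := fun j => P a j * P j a)
      (fun j _ => mul_nonneg (hnn a j) (hnn j a)) (Finset.mem_univ a)
  rw [h] at h1
  have h2 := hnn a a
  have h3 : P a a ≤ 1 := by nlinarith
  omega

private lemma exists_unique_one {k : ℕ} (f : Fin k → ℤ) (h01 : ∀ a, f a = 0 ∨ f a = 1)
    (hsum : ∑ a, f a = 1) : ∃ a, f a = 1 ∧ ∀ b, b ≠ a → f b = 0 := by
  have hnn : ∀ a, 0 ≤ f a := fun a => by rcases h01 a with h | h <;> omega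
  have hex : ∃ a, f a = 1 := by
    by_contra h
    push_neg at h
    have hz : ∀ a ∈ Finset.univ, f a = 0 := by
      intro a _
      rcases h01 a with h' | h'
      · exact h'
      · exact absurd h' (h a)
    rw [Finset.sum_eq_zero hz] at hsum
    omega
  obtain ⟨a, ha⟩ := hex
  refine ⟨a, ha, fun b hb => ?_⟩
  by_contra hb0
  have hb1 : f b = 1 := by rcases h01 b with h' | h' <;> tauto
  have h4 := Finset.add_sum_erase Finset.univ f (Finset.mem_univ a)
  have h3 : f b ≤ ∑ x ∈ Finset.univ.erase a, f x :=
    Finset.single_le_sum (fun i _ => hnn i) (Finset.mem_erase.mpr ⟨hb, Finset.mem_univ b⟩)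
  omega

private lemma trace_eq_five {k : ℕ} (hk : 1 ≤ k) (M : Matrix (Fin k) (Fin k) ℤ)
    (hpos : ∀ a b, 1 ≤ M a b) (hM : M * M = (5 : ℤ) • M) :
    Matrix.trace M = 5 := by
  set z : Fin k := ⟨0, hk⟩ with hz
  have hMe : ∀ a b, ∑ c, M a c * M c b = 5 * M a b := by
    intro a b
    have := congrFun (congrFun hM a) b
    rwa [Matrix.mul_apply, Matrix.smul_apply, smul_eq_mul] at this
  have hMpos : ∀ a b, (0 : ℤ) < M a b := fun a b => lt_of_lt_of_le one_pos (hpos a b)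
  -- key proportionality: columns are pairwise proportional
  have key : ∀ b a : Fin k, M b b * M a z = M a b * M b z := by
    intro b a
    obtain ⟨a₀, -, hmin⟩ := Finset.exists_min_image Finset.univ
      (fun c => (M c b : ℚ) / (M c z : ℚ)) ⟨z, Finset.mem_univ z⟩
    have hv : ∀ c, 0 ≤ M c b * M a₀ z - M a₀ b * M c z := by
      intro c
      have h1 := hmin c (Finset.mem_univ c)
      have hd1 : (0 : ℚ) < (M a₀ z : ℚ) := by exact_mod_cast hMpos a₀ z
      have hd2 : (0 : ℚ) < (M c z : ℚ) := by exact_mod_cast hMpos c z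
      rw [div_le_div_iff₀ hd1 hd2] at h1
      have : (M a₀ b : ℤ) * M c z ≤ M c b * M a₀ z := by exact_mod_cast h1
      omega
    have hS : ∑ c, M a₀ c * (M c b * M a₀ z - M a₀ b * M c z) = 0 := by
      have h1 := hMe a₀ b
      have h2 := hMe a₀ z
      calc ∑ c, M a₀ c * (M c b * M a₀ z - M a₀ b * M c z)
          = M a₀ z * (∑ c, M a₀ c * M c b) - M a₀ b * (∑ c, M a₀ c * M c z) := by
            rw [Finset.mul_sum, Finset.mul_sum, ← Finset.sum_sub_distrib]
            exact Finset.sum_congr rfl (fun c _ => by ring)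
        _ = 0 := by rw [h1, h2]; ring
    have hterm : ∀ c, M c b * M a₀ z - M a₀ b * M c z = 0 := by
      intro c
      have h0 := (Finset.sum_eq_zero_iff_of_nonneg
        (fun c _ => mul_nonneg (hMpos a₀ c).le (hv c))).mp hS c (Finset.mem_univ c)
      rcases mul_eq_zero.mp h0 with h | h
      · exact absurd h (hMpos a₀ c).ne'
      · exact h
    have eq1 : M a b * M a₀ z = M a₀ b * M a z := by have := hterm a; omega
    have eq2 : M b b * M a₀ z = M a₀ b * M b z := by have := hterm b; omega
    have hcz : M a₀ z ≠ 0 := (hMpos a₀ z).ne'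
    apply mul_right_cancel₀ hcz
    linear_combination M a z * eq2 - M b z * eq1
  have htr : Matrix.trace M * M z z = 5 * M z z := by
    have hsum : ∑ c, M c c * M z z = ∑ c, M z c * M c z :=
      Finset.sum_congr rfl (fun c _ => key c z)
    calc Matrix.trace M * M z z = ∑ c, M c c * M z z := by
          rw [Matrix.trace, Finset.sum_mul]; rfl
      _ = ∑ c, M z c * M c z := hsum
      _ = 5 * M z z := hMe z z
  exact mul_right_cancel₀ (hMpos z z).ne' htr

/-- `Mm i j` represents the matrix of the projective functor `F_{(i+1)(j+1)}` for the
path algebra of the quiver `1 → 2 → 3` modulo the zero relation `βα = 0`.  In `Fin 3`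
indexing the composition relations read: `M_{ij} • M_{st} = M_{it}` if `s = j` or
`j = s + 1`, and `M_{ij} • M_{st} = 0` otherwise.

If the nine matrices are nonzero with nonnegative integer entries, and their sum `M`
has positive entries and satisfies `M² = 5M`, then the diagonals of `M₁₃, M₂₁, M₃₁, M₃₂`
are zero, and each of `M₁₁, M₁₂, M₂₂, M₂₃, M₃₃` has exactly one diagonal entry equal to
`1` and all other diagonal entries zero. -/
theorem proj_functor_matrices_quiver_A3_diagonals (k : ℕ) (hk : 1 ≤ k)
    (Mm : Fin 3 → Fin 3 → Matrix (Fin k) (Fin k) ℤ)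
    (hnz : ∀ i j, Mm i j ≠ 0)
    (hnn : ∀ i j a b, 0 ≤ Mm i j a b)
    (hrel : ∀ i j s t : Fin 3,
      Mm i j * Mm s t = if s = j ∨ (j : ℕ) = (s : ℕ) + 1 then Mm i t else 0)
    (M : Matrix (Fin k) (Fin k) ℤ)
    (hMdef : M = Mm 0 0 + Mm 0 1 + Mm 0 2 + Mm 1 0 + Mm 1 1 + Mm 1 2 +
      Mm 2 0 + Mm 2 1 + Mm 2 2)
    (hpos : ∀ a b, 1 ≤ M a b)
    (hM : M * M = (5 : ℤ) • M) :
    ((∀ a, Mm 0 2 a a = 0) ∧ (∀ a, Mm 1 0 a a = 0) ∧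
     (∀ a, Mm 2 0 a a = 0) ∧ (∀ a, Mm 2 1 a a = 0)) ∧
    (∀ p : Fin 3 × Fin 3,
      p ∈ ({(0, 0), (0, 1), (1, 1), (1, 2), (2, 2)} : Set (Fin 3 × Fin 3)) →
      ∃ a, Mm p.1 p.2 a a = 1 ∧ ∀ b, b ≠ a → Mm p.1 p.2 b b = 0) := by
  -- instances of the composition relations
  have r : ∀ i j s t : Fin 3, (s = j ∨ (j : ℕ) = (s : ℕ) + 1) →
      Mm i j * Mm s t = Mm i t := by
    intro i j s t h
    rw [hrel i j s t, if_pos h]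
  have r0 : ∀ i j s t : Fin 3, ¬(s = j ∨ (j : ℕ) = (s : ℕ) + 1) →
      Mm i j * Mm s t = 0 := by
    intro i j s t h
    rw [hrel i j s t, if_neg h]
  -- traces of the four "wrong direction" matrices vanish
  have t02 : Matrix.trace (Mm 0 2) = 0 := by
    have h1 : Mm 0 0 * Mm 0 2 = Mm 0 2 := r 0 0 0 2 (by decide)
    have h2 : Mm 0 2 * Mm 0 0 = 0 := r0 0 2 0 0 (by decide)
    rw [← h1, Matrix.trace_mul_comm, h2, Matrix.trace_zero]
  have t10 : Matrix.trace (Mm 1 0) = 0 := by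
    have h1 : Mm 1 0 * Mm 0 0 = Mm 1 0 := r 1 0 0 0 (by decide)
    have h2 : Mm 0 0 * Mm 1 0 = 0 := r0 0 0 1 0 (by decide)
    rw [← h1, Matrix.trace_mul_comm, h2, Matrix.trace_zero]
  have t20 : Matrix.trace (Mm 2 0) = 0 := by
    have h1 : Mm 2 0 * Mm 0 0 = Mm 2 0 := r 2 0 0 0 (by decide)
    have h2 : Mm 0 0 * Mm 2 0 = 0 := r0 0 0 2 0 (by decide)
    rw [← h1, Matrix.trace_mul_comm, h2, Matrix.trace_zero]
  have t21 : Matrix.trace (Mm 2 1) = 0 := by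
    have h1 : Mm 2 0 * Mm 0 1 = Mm 2 1 := r 2 0 0 1 (by decide)
    have h2 : Mm 0 1 * Mm 2 0 = 0 := r0 0 1 2 0 (by decide)
    rw [← h1, Matrix.trace_mul_comm, h2, Matrix.trace_zero]
  -- the five "good" matrices all have trace equal to trace of Mm 0 0
  have t01 : Matrix.trace (Mm 0 1) = Matrix.trace (Mm 0 0) := by
    have h1 : Mm 0 0 * Mm 0 1 = Mm 0 1 := r 0 0 0 1 (by decide)
    have h2 : Mm 0 1 * Mm 0 0 = Mm 0 0 := r 0 1 0 0 (by decide)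
    rw [← h1, Matrix.trace_mul_comm, h2]
  have t11 : Matrix.trace (Mm 1 1) = Matrix.trace (Mm 0 0) := by
    have h1 : Mm 1 0 * Mm 0 1 = Mm 1 1 := r 1 0 0 1 (by decide)
    have h2 : Mm 0 1 * Mm 1 0 = Mm 0 0 := r 0 1 1 0 (by decide)
    rw [← h1, Matrix.trace_mul_comm, h2]
  have t12 : Matrix.trace (Mm 1 2) = Matrix.trace (Mm 0 0) := by
    have h1 : Mm 1 0 * Mm 0 2 = Mm 1 2 := r 1 0 0 2 (by decide)
    have h2 : Mm 0 2 * Mm 1 0 = Mm 0 0 := r 0 2 1 0 (by decide)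
    rw [← h1, Matrix.trace_mul_comm, h2]
  have t22 : Matrix.trace (Mm 2 2) = Matrix.trace (Mm 0 0) := by
    have h1 : Mm 2 0 * Mm 0 2 = Mm 2 2 := r 2 0 0 2 (by decide)
    have h2 : Mm 0 2 * Mm 2 0 = Mm 0 0 := r 0 2 2 0 (by decide)
    rw [← h1, Matrix.trace_mul_comm, h2]
  -- total trace equals 5 hence trace of Mm 0 0 is 1
  have htr5 : Matrix.trace M = 5 := trace_eq_five hk M hpos hM
  have htrM : Matrix.trace M = 5 * Matrix.trace (Mm 0 0) := by
    rw [hMdef]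
    simp only [Matrix.trace_add]
    rw [t01, t02, t10, t11, t12, t20, t21, t22]
    ring
  have hc : Matrix.trace (Mm 0 0) = 1 := by omega
  -- the five good matrices are idempotent
  have i00 : Mm 0 0 * Mm 0 0 = Mm 0 0 := r 0 0 0 0 (by decide)
  have i01 : Mm 0 1 * Mm 0 1 = Mm 0 1 := r 0 1 0 1 (by decide)
  have i11 : Mm 1 1 * Mm 1 1 = Mm 1 1 := r 1 1 1 1 (by decide)
  have i12 : Mm 1 2 * Mm 1 2 = Mm 1 2 := r 1 2 1 2 (by decide)
  have i22 : Mm 2 2 * Mm 2 2 = Mm 2 2 := r 2 2 2 2 (by decide)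
  constructor
  · exact ⟨diag_zero_of_trace_zero _ (hnn 0 2) t02,
      diag_zero_of_trace_zero _ (hnn 1 0) t10,
      diag_zero_of_trace_zero _ (hnn 2 0) t20,
      diag_zero_of_trace_zero _ (hnn 2 1) t21⟩
  · intro p hp
    have main : ∀ i j : Fin 3, Mm i j * Mm i j = Mm i j →
        Matrix.trace (Mm i j) = 1 →
        ∃ a, Mm i j a a = 1 ∧ ∀ b, b ≠ a → Mm i j b b = 0 := by
      intro i j hidem htr
      exact exists_unique_one (fun a => Mm i j a a)
        (idem_diag (Mm i j) (hnn i j) hidem) htr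
    simp only [Set.mem_insert_iff, Set.mem_singleton_iff] at hp
    rcases hp with rfl | rfl | rfl | rfl | rfl
    · exact main 0 0 i00 hc
    · exact main 0 1 i01 (t01.trans hc)
    · exact main 1 1 i11 (t11.trans hc)
    · exact main 1 2 i12 (t12.trans hc)
    · exact main 2 2 i22 (t22.trans hc)
end

section
/- Let k ≥ 1 and let M_{ij}, for i,j ∈ {1,2,3}, be nine nonzero k×k matrices with nonnegative integer entries which satisfy the composition relations of k(1→2→3)/(βα), and assume that M := Σ_{i,j} M_{ij} has all entries positive and satisfies M² = 5M. Then M is not obtained by the permutation action from any of the following ten matrices: N1 = (5); N2 = [[4,1],[4,1]]; N3 = [[4,4],[1,1]]; N4 = [[4,2],[2,1]]; N5 = [[3,6],[1,2]]; N6 = [[3,3],[2,2]]; N7 = [[3,2],[3,2]]; N8 = [[3,1],[6,2]]; N9 = [[3,1,1],[3,1,1],[3,1,1]]; N10 = [[3,3,3],[1,1,1],[1,1,1]]. That is, for no permutation matrix P is P·M·P⁻¹ equal to one of N1,…,N10. -/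
open Matrix Finset in
private lemma mul_vecMulVec_mul' {n : ℕ} (A B : Matrix (Fin n) (Fin n) ℤ) (u v : Fin n → ℤ) :
    A * vecMulVec u v * B = vecMulVec (A.mulVec u) (vecMul v B) := by
  ext a b
  simp only [mul_apply, vecMulVec_apply, mulVec, vecMul, dotProduct, Finset.sum_mul,
    Finset.mul_sum]
  apply Finset.sum_congr rfl; intro c _
  apply Finset.sum_congr rfl; intro d _
  ring

open Matrix Finset in
private lemma extract' {n : ℕ} (Mm : Fin 3 → Fin 3 → Matrix (Fin n) (Fin n) ℤ)
    (hnz : ∀ i j, Mm i j ≠ 0)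
    (hnn : ∀ i j a b, 0 ≤ Mm i j a b)
    (hrel : ∀ i j s t : Fin 3,
      Mm i j * Mm s t = if s = j ∨ (j : ℕ) = (s : ℕ) + 1 then Mm i t else 0)
    (u v : Fin n → ℤ) (hu : ∀ a, 0 ≤ u a) (hv : ∀ b, 0 ≤ v b)
    (hM : Mm 0 0 + Mm 0 1 + Mm 0 2 + Mm 1 0 + Mm 1 1 + Mm 1 2 +
      Mm 2 0 + Mm 2 1 + Mm 2 2 = vecMulVec u v) :
    ∃ z w : Fin 3 → Fin n → ℤ,
      (∀ i a, 0 ≤ z i a) ∧ (∀ j b, 0 ≤ w j b) ∧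
      (∀ j s : Fin 3, (∑ c, w j c * z s c) =
          if s = j ∨ (j : ℕ) = (s : ℕ) + 1 then 1 else 0) ∧
      (∀ i, ∃ a, 1 ≤ z i a) ∧ (∀ j, ∃ b, 1 ≤ w j b) ∧
      (∀ a b, (z 0 a + z 1 a + z 2 a) * (w 0 b + w 1 b + w 2 b) = u a * v b) := by
  classical
  set z : Fin 3 → Fin n → ℤ := fun i => (Mm i 0).mulVec u with hzdef
  set w : Fin 3 → Fin n → ℤ := fun j => vecMul v (Mm 2 j) with hwdef
  have h1 : ∀ i : Fin 3, Mm i 0 * (Mm 0 0 + Mm 0 1 + Mm 0 2 + Mm 1 0 + Mm 1 1 + Mm 1 2 +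
      Mm 2 0 + Mm 2 1 + Mm 2 2) = Mm i 0 + Mm i 1 + Mm i 2 := by
    intro i
    simp only [mul_add, hrel]
    norm_num [Fin.ext_iff]
  have h2 : ∀ (i t : Fin 3), (Mm i 0 + Mm i 1 + Mm i 2) * Mm 2 t = Mm i t := by
    intro i t
    simp only [add_mul, hrel]
    norm_num [Fin.ext_iff]
  have key : ∀ i t : Fin 3, Mm i t = vecMulVec (z i) (w t) := by
    intro i t
    rw [← h2 i t, ← h1 i, mul_assoc, ← mul_assoc, hM, mul_vecMulVec_mul']
  have hEnt : ∀ (i j : Fin 3) a b, Mm i j a b = z i a * w j b := by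
    intro i j a b; rw [key i j]; rfl
  have hz0 : ∀ i a, 0 ≤ z i a := by
    intro i a
    simp only [hzdef, mulVec, dotProduct]
    exact Finset.sum_nonneg fun c _ => mul_nonneg (hnn i 0 a c) (hu c)
  have hw0 : ∀ j b, 0 ≤ w j b := by
    intro j b
    simp only [hwdef, vecMul, dotProduct]
    exact Finset.sum_nonneg fun c _ => mul_nonneg (hv c) (hnn 2 j c b)
  have hz1 : ∀ i, ∃ a, 1 ≤ z i a := by
    intro i
    by_contra h
    push_neg at h
    apply hnz i 0
    ext a b
    have := h a
    have hz : z i a = 0 := le_antisymm (by omega) (hz0 i a)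
    rw [hEnt i 0 a b, hz, zero_mul]; rfl
  have hw1 : ∀ j, ∃ b, 1 ≤ w j b := by
    intro j
    by_contra h
    push_neg at h
    apply hnz 0 j
    ext a b
    have := h b
    have hw : w j b = 0 := le_antisymm (by omega) (hw0 j b)
    rw [hEnt 0 j a b, hw, mul_zero]; rfl
  refine ⟨z, w, hz0, hw0, ?_, hz1, hw1, ?_⟩
  · intro j s
    obtain ⟨a, ha⟩ := hz1 0
    obtain ⟨b, hb⟩ := hw1 0
    have h := congrFun (congrFun (hrel 0 j s 0) a) b
    rw [mul_apply] at h
    have hc : ∀ c, Mm 0 j a c * Mm s 0 c b = (z 0 a * w 0 b) * (w j c * z s c) := by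
      intro c; rw [hEnt 0 j a c, hEnt s 0 c b]; ring
    rw [Finset.sum_congr rfl (fun c _ => hc c), ← Finset.mul_sum] at h
    have hne : z 0 a * w 0 b ≠ 0 := by positivity
    by_cases hP : s = j ∨ (j : ℕ) = (s : ℕ) + 1
    · rw [if_pos hP] at h ⊢
      rw [hEnt 0 0 a b] at h
      exact mul_left_cancel₀ hne (h.trans (mul_one _).symm)
    · rw [if_neg hP] at h ⊢
      simp only [Matrix.zero_apply] at h
      rcases mul_eq_zero.mp h with h' | h'
      · exact absurd h' hne
      · exact h'
  · intro a b
    have h := congrFun (congrFun hM a) b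
    simp only [Matrix.add_apply, vecMulVec_apply] at h
    rw [hEnt 0 0, hEnt 0 1, hEnt 0 2, hEnt 1 0, hEnt 1 1, hEnt 1 2,
      hEnt 2 0, hEnt 2 1, hEnt 2 2] at h
    rw [← h]; ring

open Matrix Finset in
private lemma nogo2a' (z w : Fin 3 → Fin 2 → ℤ)
    (hz0 : ∀ i a, 0 ≤ z i a) (hw0 : ∀ j b, 0 ≤ w j b)
    (hip : ∀ j s : Fin 3, (∑ c, w j c * z s c) =
        if s = j ∨ (j : ℕ) = (s : ℕ) + 1 then 1 else 0)
    (hz1 : ∀ i, ∃ a, 1 ≤ z i a)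
    (hb : 1 ≤ w 0 0) : False := by
  have e01 : w 0 0 * z 1 0 + w 0 1 * z 1 1 = 0 := by
    have := hip 0 1; norm_num [Fin.sum_univ_two, Fin.ext_iff] at this; linarith [this]
  have e02 : w 0 0 * z 2 0 + w 0 1 * z 2 1 = 0 := by
    have := hip 0 2; norm_num [Fin.sum_univ_two, Fin.ext_iff] at this; linarith [this]
  have e12 : w 1 0 * z 2 0 + w 1 1 * z 2 1 = 0 := by
    have := hip 1 2; norm_num [Fin.sum_univ_two, Fin.ext_iff] at this; linarith [this]
  have e11 : w 1 0 * z 1 0 + w 1 1 * z 1 1 = 1 := by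
    have := hip 1 1; norm_num [Fin.sum_univ_two, Fin.ext_iff] at this; linarith [this]
  -- from e01: z 1 0 = 0
  have p1 : w 0 0 * z 1 0 = 0 := by
    have h1 := mul_nonneg (hw0 0 0) (hz0 1 0)
    have h2 := mul_nonneg (hw0 0 1) (hz0 1 1)
    linarith
  have p2 : w 0 0 * z 2 0 = 0 := by
    have h1 := mul_nonneg (hw0 0 0) (hz0 2 0)
    have h2 := mul_nonneg (hw0 0 1) (hz0 2 1)
    linarith
  have hz10 : z 1 0 = 0 := by
    rcases mul_eq_zero.mp p1 with h | h
    · omega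
    · exact h
  have hz20 : z 2 0 = 0 := by
    rcases mul_eq_zero.mp p2 with h | h
    · omega
    · exact h
  have hz11 : 1 ≤ z 1 1 := by
    obtain ⟨a, ha⟩ := hz1 1
    rcases (by omega : a = 0 ∨ a = 1) with h | h <;> subst h
    · omega
    · exact ha
  have hz21 : 1 ≤ z 2 1 := by
    obtain ⟨a, ha⟩ := hz1 2
    rcases (by omega : a = 0 ∨ a = 1) with h | h <;> subst h
    · omega
    · exact ha
  have p3 : w 1 1 * z 2 1 = 0 := by
    have h1 := mul_nonneg (hw0 1 0) (hz0 2 0)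
    have h2 := mul_nonneg (hw0 1 1) (hz0 2 1)
    linarith
  have hw11 : w 1 1 = 0 := by
    rcases mul_eq_zero.mp p3 with h | h
    · exact h
    · omega
  rw [hz10, hw11, mul_zero, zero_mul, add_zero] at e11
  exact absurd e11 (by norm_num)

open Matrix Finset in
private lemma nogo2' (z w : Fin 3 → Fin 2 → ℤ)
    (hz0 : ∀ i a, 0 ≤ z i a) (hw0 : ∀ j b, 0 ≤ w j b)
    (hip : ∀ j s : Fin 3, (∑ c, w j c * z s c) =
        if s = j ∨ (j : ℕ) = (s : ℕ) + 1 then 1 else 0)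
    (hz1 : ∀ i, ∃ a, 1 ≤ z i a)
    (hw1 : ∀ j, ∃ b, 1 ≤ w j b) : False := by
  obtain ⟨b, hb⟩ := hw1 0
  fin_cases b
  · exact nogo2a' z w hz0 hw0 hip hz1 hb
  · refine nogo2a' (fun i a => z i (a + 1)) (fun j b => w j (b + 1))
      (fun i a => hz0 i _) (fun j b => hw0 j _) ?_ ?_ hb
    · intro j s
      rw [← hip j s, Fin.sum_univ_two, Fin.sum_univ_two]
      show w j (0 + 1) * z s (0 + 1) + w j (1 + 1) * z s (1 + 1) = _
      rw [show (0 + 1 : Fin 2) = 1 from rfl, show (1 + 1 : Fin 2) = 0 from rfl]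
      ring
    · intro i
      obtain ⟨a, ha⟩ := hz1 i
      refine ⟨a + 1, ?_⟩
      rcases (by omega : a = 0 ∨ a = 1) with h | h <;> subst h <;> exact ha

open Matrix Finset in
private lemma coord_bound' {n : ℕ} (z w : Fin 3 → Fin n → ℤ)
    (hz0 : ∀ i a, 0 ≤ z i a) (hw0 : ∀ j b, 0 ≤ w j b)
    (hip : ∀ j s : Fin 3, (∑ c, w j c * z s c) =
        if s = j ∨ (j : ℕ) = (s : ℕ) + 1 then 1 else 0)
    (j s : Fin 3) (c : Fin n) :
    w j c * z s c ≤ if s = j ∨ (j : ℕ) = (s : ℕ) + 1 then 1 else 0 := by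
  rw [← hip j s]
  exact Finset.single_le_sum (fun i _ => mul_nonneg (hw0 j i) (hz0 s i)) (mem_univ c)

open Matrix Finset in
private lemma coordZ' {n : ℕ} (z w : Fin 3 → Fin n → ℤ)
    (hz0 : ∀ i a, 0 ≤ z i a) (hw0 : ∀ j b, 0 ≤ w j b)
    (hip : ∀ j s : Fin 3, (∑ c, w j c * z s c) =
        if s = j ∨ (j : ℕ) = (s : ℕ) + 1 then 1 else 0)
    (c : Fin n) (h1 : z 0 c + z 1 c + z 2 c = 1) :
    w 0 c + w 1 c + w 2 c ≤ 2 := by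
  have B := fun j s => coord_bound' z w hz0 hw0 hip j s c
  have b00 := B 0 0; have b10 := B 1 0; have b20 := B 2 0
  have b01 := B 0 1; have b11 := B 1 1; have b21 := B 2 1
  have b02 := B 0 2; have b12 := B 1 2; have b22 := B 2 2
  norm_num [Fin.ext_iff] at b00 b10 b20 b01 b11 b21 b02 b12 b22
  have hz00 := hz0 0 c; have hz10 := hz0 1 c; have hz20 := hz0 2 c
  have hw00 := hw0 0 c; have hw10 := hw0 1 c; have hw20 := hw0 2 c
  rcases (by omega : (z 0 c = 1 ∧ z 1 c = 0 ∧ z 2 c = 0) ∨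
      (z 1 c = 1 ∧ z 0 c = 0 ∧ z 2 c = 0) ∨
      (z 2 c = 1 ∧ z 0 c = 0 ∧ z 1 c = 0)) with ⟨e, _, _⟩ | ⟨e, _, _⟩ | ⟨e, _, _⟩
  · rw [e] at b00 b10 b20; simp at b00 b10 b20; omega
  · rw [e] at b01 b11 b21; simp at b01 b11 b21; omega
  · rw [e] at b02 b12 b22; simp at b02 b12 b22; omega

open Matrix Finset in
private lemma coordW' {n : ℕ} (z w : Fin 3 → Fin n → ℤ)
    (hz0 : ∀ i a, 0 ≤ z i a) (hw0 : ∀ j b, 0 ≤ w j b)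
    (hip : ∀ j s : Fin 3, (∑ c, w j c * z s c) =
        if s = j ∨ (j : ℕ) = (s : ℕ) + 1 then 1 else 0)
    (c : Fin n) (h1 : w 0 c + w 1 c + w 2 c = 1) :
    z 0 c + z 1 c + z 2 c ≤ 2 := by
  have B := fun j s => coord_bound' z w hz0 hw0 hip j s c
  have b00 := B 0 0; have b10 := B 1 0; have b20 := B 2 0
  have b01 := B 0 1; have b11 := B 1 1; have b21 := B 2 1
  have b02 := B 0 2; have b12 := B 1 2; have b22 := B 2 2
  norm_num [Fin.ext_iff] at b00 b10 b20 b01 b11 b21 b02 b12 b22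
  have hz00 := hz0 0 c; have hz10 := hz0 1 c; have hz20 := hz0 2 c
  have hw00 := hw0 0 c; have hw10 := hw0 1 c; have hw20 := hw0 2 c
  rcases (by omega : (w 0 c = 1 ∧ w 1 c = 0 ∧ w 2 c = 0) ∨
      (w 1 c = 1 ∧ w 0 c = 0 ∧ w 2 c = 0) ∨
      (w 2 c = 1 ∧ w 0 c = 0 ∧ w 1 c = 0)) with ⟨e, _, _⟩ | ⟨e, _, _⟩ | ⟨e, _, _⟩
  · rw [e] at b00 b01 b02; simp at b00 b01 b02; omega
  · rw [e] at b10 b11 b12; simp at b10 b11 b12; omega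
  · rw [e] at b20 b21 b22; simp at b20 b21 b22; omega

open Matrix Finset in
private lemma main_aux' {k n : ℕ} (Mm : Fin 3 → Fin 3 → Matrix (Fin k) (Fin k) ℤ)
    (hnz : ∀ i j, Mm i j ≠ 0)
    (hnn : ∀ i j a b, 0 ≤ Mm i j a b)
    (hrel : ∀ i j s t : Fin 3,
      Mm i j * Mm s t = if s = j ∨ (j : ℕ) = (s : ℕ) + 1 then Mm i t else 0)
    (M : Matrix (Fin k) (Fin k) ℤ)
    (hMdef : M = Mm 0 0 + Mm 0 1 + Mm 0 2 + Mm 1 0 + Mm 1 1 + Mm 1 2 +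
      Mm 2 0 + Mm 2 1 + Mm 2 2)
    (e : Fin k ≃ Fin n) (u v : Fin n → ℤ) (hu : ∀ a, 0 ≤ u a) (hv : ∀ b, 0 ≤ v b)
    (huv : Matrix.reindex e e M = vecMulVec u v) :
    ∃ z w : Fin 3 → Fin n → ℤ,
      (∀ i a, 0 ≤ z i a) ∧ (∀ j b, 0 ≤ w j b) ∧
      (∀ j s : Fin 3, (∑ c, w j c * z s c) =
          if s = j ∨ (j : ℕ) = (s : ℕ) + 1 then 1 else 0) ∧
      (∀ i, ∃ a, 1 ≤ z i a) ∧ (∀ j, ∃ b, 1 ≤ w j b) ∧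
      (∀ a b, (z 0 a + z 1 a + z 2 a) * (w 0 b + w 1 b + w 2 b) = u a * v b) := by
  refine extract' (fun i j => Matrix.reindex e e (Mm i j)) ?_ ?_ ?_ u v hu hv ?_
  · intro i j h
    apply hnz i j
    ext a b
    have := congrFun (congrFun h (e a)) (e b)
    simpa using this
  · intro i j a b
    simp only [Matrix.reindex_apply, Matrix.submatrix_apply]
    exact hnn i j _ _
  · intro i j s t
    show (Matrix.reindex e e) (Mm i j) * (Matrix.reindex e e) (Mm s t) =
      if s = j ∨ (j : ℕ) = (s : ℕ) + 1 then (Matrix.reindex e e) (Mm i t) else 0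
    rw [Matrix.reindex_apply, Matrix.reindex_apply,
      Matrix.submatrix_mul_equiv (Mm i j) (Mm s t) _ e.symm _, hrel i j s t]
    split_ifs with h
    · rw [Matrix.reindex_apply]
    · simp
  · rw [← huv, hMdef]
    ext a b
    simp [Matrix.reindex_apply, Matrix.submatrix_apply, Matrix.add_apply]

open Matrix Finset in
/-- With `Mm i j` as the matrices of the projective functors for
`k(1→2→3)/(βα)` (composition relations in `Fin 3` indexing:
`M_{ij} • M_{st} = M_{it}` if `s = j` or `j = s + 1`, and `0` otherwise), if all nine
matrices are nonzero with nonnegative integer entries and their sum `M` has positive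
entries and satisfies `M² = 5M`, then `M` is not obtained by the permutation action
(conjugation by a permutation matrix) from any of `N₁, …, N₁₀`. -/
theorem proj_functor_matrix_quiver_A3_not_N1_to_N10 (k : ℕ) (hk : 1 ≤ k)
    (Mm : Fin 3 → Fin 3 → Matrix (Fin k) (Fin k) ℤ)
    (hnz : ∀ i j, Mm i j ≠ 0)
    (hnn : ∀ i j a b, 0 ≤ Mm i j a b)
    (hrel : ∀ i j s t : Fin 3,
      Mm i j * Mm s t = if s = j ∨ (j : ℕ) = (s : ℕ) + 1 then Mm i t else 0)
    (M : Matrix (Fin k) (Fin k) ℤ)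
    (hMdef : M = Mm 0 0 + Mm 0 1 + Mm 0 2 + Mm 1 0 + Mm 1 1 + Mm 1 2 +
      Mm 2 0 + Mm 2 1 + Mm 2 2)
    (hpos : ∀ a b, 1 ≤ M a b)
    (hM : M * M = (5 : ℤ) • M) :
    (¬ ∃ e : Fin k ≃ Fin 1, Matrix.reindex e e M = !![5]) ∧
    (¬ ∃ e : Fin k ≃ Fin 2, Matrix.reindex e e M = !![4, 1; 4, 1]) ∧
    (¬ ∃ e : Fin k ≃ Fin 2, Matrix.reindex e e M = !![4, 4; 1, 1]) ∧
    (¬ ∃ e : Fin k ≃ Fin 2, Matrix.reindex e e M = !![4, 2; 2, 1]) ∧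
    (¬ ∃ e : Fin k ≃ Fin 2, Matrix.reindex e e M = !![3, 6; 1, 2]) ∧
    (¬ ∃ e : Fin k ≃ Fin 2, Matrix.reindex e e M = !![3, 3; 2, 2]) ∧
    (¬ ∃ e : Fin k ≃ Fin 2, Matrix.reindex e e M = !![3, 2; 3, 2]) ∧
    (¬ ∃ e : Fin k ≃ Fin 2, Matrix.reindex e e M = !![3, 1; 6, 2]) ∧
    (¬ ∃ e : Fin k ≃ Fin 3, Matrix.reindex e e M = !![3, 1, 1; 3, 1, 1; 3, 1, 1]) ∧
    (¬ ∃ e : Fin k ≃ Fin 3, Matrix.reindex e e M = !![3, 3, 3; 1, 1, 1; 1, 1, 1]) := by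
  refine ⟨?_, ?_, ?_, ?_, ?_, ?_, ?_, ?_, ?_, ?_⟩
  · -- N1
    rintro ⟨e, he⟩
    obtain ⟨z, w, hz0, hw0, hip, hz1, hw1, huv⟩ :=
      main_aux' Mm hnz hnn hrel M hMdef e ![5] ![1]
        (by decide) (by decide) (by rw [he]; decide)
    have h00 : (z 0 0 + z 1 0 + z 2 0) * (w 0 0 + w 1 0 + w 2 0) = 5 := by
      simpa using huv 0 0
    obtain ⟨a, ha⟩ := hz1 0
    obtain ⟨b, hb⟩ := hw1 0
    have ha0 : a = 0 := Subsingleton.elim a 0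
    have hb0 : b = 0 := Subsingleton.elim b 0
    subst ha0; subst hb0
    have hZ1 : 1 ≤ z 0 0 + z 1 0 + z 2 0 := by
      have := hz0 1 0; have := hz0 2 0; omega
    have hW1 : 1 ≤ w 0 0 + w 1 0 + w 2 0 := by
      have := hw0 1 0; have := hw0 2 0; omega
    set Z := z 0 0 + z 1 0 + z 2 0 with hZ
    set W := w 0 0 + w 1 0 + w 2 0 with hW
    have hZ5 : Z ≤ 5 := by nlinarith
    rcases (by omega : Z = 1 ∨ Z = 2 ∨ Z = 3 ∨ Z = 4 ∨ Z = 5) with h | h | h | h | h <;>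
      rw [h] at h00
    · have := coordZ' z w hz0 hw0 hip 0 (by omega)
      omega
    · omega
    · omega
    · omega
    · have hW1' : w 0 0 + w 1 0 + w 2 0 = 1 := by omega
      have := coordW' z w hz0 hw0 hip 0 hW1'
      omega
  · -- N2
    rintro ⟨e, he⟩
    obtain ⟨z, w, hz0, hw0, hip, hz1, hw1, huv⟩ :=
      main_aux' Mm hnz hnn hrel M hMdef e ![1,1] ![4,1]
        (by decide) (by decide) (by rw [he]; decide)
    exact nogo2' z w hz0 hw0 hip hz1 hw1
  · -- N3
    rintro ⟨e, he⟩
    obtain ⟨z, w, hz0, hw0, hip, hz1, hw1, huv⟩ :=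
      main_aux' Mm hnz hnn hrel M hMdef e ![4,1] ![1,1]
        (by decide) (by decide) (by rw [he]; decide)
    exact nogo2' z w hz0 hw0 hip hz1 hw1
  · -- N4
    rintro ⟨e, he⟩
    obtain ⟨z, w, hz0, hw0, hip, hz1, hw1, huv⟩ :=
      main_aux' Mm hnz hnn hrel M hMdef e ![2,1] ![2,1]
        (by decide) (by decide) (by rw [he]; decide)
    exact nogo2' z w hz0 hw0 hip hz1 hw1
  · -- N5
    rintro ⟨e, he⟩
    obtain ⟨z, w, hz0, hw0, hip, hz1, hw1, huv⟩ :=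
      main_aux' Mm hnz hnn hrel M hMdef e ![3,1] ![1,2]
        (by decide) (by decide) (by rw [he]; decide)
    exact nogo2' z w hz0 hw0 hip hz1 hw1
  · -- N6
    rintro ⟨e, he⟩
    obtain ⟨z, w, hz0, hw0, hip, hz1, hw1, huv⟩ :=
      main_aux' Mm hnz hnn hrel M hMdef e ![3,2] ![1,1]
        (by decide) (by decide) (by rw [he]; decide)
    exact nogo2' z w hz0 hw0 hip hz1 hw1
  · -- N7
    rintro ⟨e, he⟩
    obtain ⟨z, w, hz0, hw0, hip, hz1, hw1, huv⟩ :=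
      main_aux' Mm hnz hnn hrel M hMdef e ![1,1] ![3,2]
        (by decide) (by decide) (by rw [he]; decide)
    exact nogo2' z w hz0 hw0 hip hz1 hw1
  · -- N8
    rintro ⟨e, he⟩
    obtain ⟨z, w, hz0, hw0, hip, hz1, hw1, huv⟩ :=
      main_aux' Mm hnz hnn hrel M hMdef e ![1,2] ![3,1]
        (by decide) (by decide) (by rw [he]; decide)
    exact nogo2' z w hz0 hw0 hip hz1 hw1
  · -- N9
    rintro ⟨e, he⟩
    obtain ⟨z, w, hz0, hw0, hip, hz1, hw1, huv⟩ :=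
      main_aux' Mm hnz hnn hrel M hMdef e ![1,1,1] ![3,1,1]
        (by decide) (by decide) (by rw [he]; decide)
    have h01 : (z 0 0 + z 1 0 + z 2 0) * (w 0 1 + w 1 1 + w 2 1) = 1 := by
      simpa using huv 0 1
    have h00 : (z 0 0 + z 1 0 + z 2 0) * (w 0 0 + w 1 0 + w 2 0) = 3 := by
      simpa using huv 0 0
    have hZnn : 0 ≤ z 0 0 + z 1 0 + z 2 0 := by
      have := hz0 0 0; have := hz0 1 0; have := hz0 2 0; omega
    rcases Int.mul_eq_one_iff_eq_one_or_neg_one.mp h01 with ⟨hZ, _⟩ | ⟨hZ, _⟩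
    · have hle := coordZ' z w hz0 hw0 hip 0 hZ
      rw [hZ, one_mul] at h00
      omega
    · omega
  · -- N10
    rintro ⟨e, he⟩
    obtain ⟨z, w, hz0, hw0, hip, hz1, hw1, huv⟩ :=
      main_aux' Mm hnz hnn hrel M hMdef e ![3,1,1] ![1,1,1]
        (by decide) (by decide) (by rw [he]; decide)
    have h10 : (z 0 1 + z 1 1 + z 2 1) * (w 0 0 + w 1 0 + w 2 0) = 1 := by
      simpa using huv 1 0
    have h00 : (z 0 0 + z 1 0 + z 2 0) * (w 0 0 + w 1 0 + w 2 0) = 3 := by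
      simpa using huv 0 0
    have hWnn : 0 ≤ w 0 0 + w 1 0 + w 2 0 := by
      have := hw0 0 0; have := hw0 1 0; have := hw0 2 0; omega
    rcases Int.mul_eq_one_iff_eq_one_or_neg_one.mp h10 with ⟨_, hW⟩ | ⟨_, hW⟩
    · have hle := coordW' z w hz0 hw0 hip 0 hW
      rw [hW, mul_one] at h00
      omega
    · omega
end

section
/- There do not exist nine nonzero 3×3 matrices M_{ij} (i,j ∈ {1,2,3}) with nonnegative integer entries which satisfy the composition relations of k(1→2→3)/(βα), whose sum Σ_{i,j} M_{ij} equals N11 = [[2,2,2],[2,2,2],[1,1,1]], and whose diagonals are as follows: the diagonal of M11 and of M12 is (1,0,0), the diagonal of M22 and of M23 is (0,1,0), the diagonal of M33 is (0,0,1), and M13, M21, M31, M32 have zero diagonal. -/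
/-- There are no nine nonzero `3×3` matrices with nonnegative integer entries satisfying
the composition relations of `k(1→2→3)/(βα)` (in `Fin 3` indexing:
`M_{ij} • M_{st} = M_{it}` if `s = j` or `j = s + 1`, and `0` otherwise), with sum
`N₁₁ = [[2,2,2],[2,2,2],[1,1,1]]` and with the prescribed diagonals. -/
theorem no_proj_functor_matrices_quiver_A3_N11 :
    ¬ ∃ Mm : Fin 3 → Fin 3 → Matrix (Fin 3) (Fin 3) ℤ,
      (∀ i j, Mm i j ≠ 0) ∧
      (∀ i j a b, 0 ≤ Mm i j a b) ∧
      (∀ i j s t : Fin 3,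
        Mm i j * Mm s t = if s = j ∨ (j : ℕ) = (s : ℕ) + 1 then Mm i t else 0) ∧
      (Mm 0 0 + Mm 0 1 + Mm 0 2 + Mm 1 0 + Mm 1 1 + Mm 1 2 + Mm 2 0 + Mm 2 1 + Mm 2 2 =
        !![2, 2, 2; 2, 2, 2; 1, 1, 1]) ∧
      (∀ a, Mm 0 0 a a = ![1, 0, 0] a) ∧ (∀ a, Mm 0 1 a a = ![1, 0, 0] a) ∧
      (∀ a, Mm 1 1 a a = ![0, 1, 0] a) ∧ (∀ a, Mm 1 2 a a = ![0, 1, 0] a) ∧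
      (∀ a, Mm 2 2 a a = ![0, 0, 1] a) ∧
      (∀ a, Mm 0 2 a a = 0) ∧ (∀ a, Mm 1 0 a a = 0) ∧
      (∀ a, Mm 2 0 a a = 0) ∧ (∀ a, Mm 2 1 a a = 0) := by
  rintro ⟨Mm, hne, hpos, hmul, hsum, hd00, hd01, hd11, hd12, hd22, hd02, hd10, hd20, hd21⟩
  -- diagonal facts
  have a00 : Mm 1 1 0 0 = 0 := by simpa using hd11 0
  have b11 : Mm 1 2 1 1 = 1 := by simpa using hd12 1
  have b22 : Mm 1 2 2 2 = 0 := by simpa using hd12 2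
  have c11 : Mm 2 2 1 1 = 0 := by simpa using hd22 1
  have c22 : Mm 2 2 2 2 = 1 := by simpa using hd22 2
  have e00 : Mm 2 1 0 0 = 0 := hd21 0
  have e11 : Mm 2 1 1 1 = 0 := hd21 1
  have e22 : Mm 2 1 2 2 = 0 := hd21 2
  -- product equations
  have hDB : Mm 2 1 * Mm 1 2 = Mm 2 2 := by simpa using hmul 2 1 1 2
  have hDA : Mm 2 1 * Mm 1 1 = Mm 2 1 := by simpa using hmul 2 1 1 1
  have hCB : Mm 2 2 * Mm 1 2 = Mm 2 2 := by simpa using hmul 2 2 1 2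
  have hCD : Mm 2 2 * Mm 2 1 = Mm 2 1 := by simpa using hmul 2 2 2 1
  have hBC : Mm 1 2 * Mm 2 2 = Mm 1 2 := by simpa using hmul 1 2 2 2
  -- scalar entry equations
  have eDB22 := congrFun (congrFun hDB 2) 2
  have eDB01 := congrFun (congrFun hDB 0) 1
  have eDA20 := congrFun (congrFun hDA 2) 0
  have eCB22 := congrFun (congrFun hCB 2) 2
  have eCD21 := congrFun (congrFun hCD 2) 1
  have eCD22 := congrFun (congrFun hCD 2) 2
  have eBC11 := congrFun (congrFun hBC 1) 1
  rw [Matrix.mul_apply, Fin.sum_univ_three] at eDB22 eDB01 eDA20 eCB22 eCD21 eCD22 eBC11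
  simp only [a00, b11, b22, c11, c22, e00, e11, e22] at eDB22 eDB01 eDA20 eCB22 eCD21 eCD22 eBC11
  -- sum at entry (2,1)
  have S := congrFun (congrFun hsum 2) 1
  simp only [Matrix.add_apply] at S
  norm_num at S
  -- case split on Mm 2 1 2 1
  rcases lt_or_ge (Mm 2 1 2 1) 1 with h | h
  · -- Mm 2 1 2 1 = 0
    have hz : Mm 2 1 2 1 = 0 := le_antisymm (by omega) (hpos 2 1 2 1)
    simp only [hz] at eDA20 eDB22
    -- eDA20 : Mm21 2 0 * 0 + 0 * Mm11 1 0 + 0 * Mm11 2 0 = Mm21 2 0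
    -- eDB22 : Mm21 2 0 * Mm12 0 2 + 0 * Mm12 1 2 + 0 * 0 = 1
    have hz2 : Mm 2 1 2 0 = 0 := by linarith [eDA20]
    rw [hz2] at eDB22
    linarith [eDB22]
  · -- Mm 2 1 2 1 ≥ 1 : forces Mm 2 2 2 1 = 0
    have hc21 : Mm 2 2 2 1 = 0 := by
      have := hpos 0 0 2 1; have := hpos 0 1 2 1; have := hpos 0 2 2 1
      have := hpos 1 0 2 1; have := hpos 1 1 2 1; have := hpos 1 2 2 1
      have := hpos 2 0 2 1; have := hpos 2 2 2 1
      linarith [S.trans (by rfl : _ = (1:ℤ))]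
    simp only [hc21] at eCB22 eCD21 eCD22 eBC11
    -- eCB22 : Mm22 2 0 * Mm12 0 2 + 0 * Mm12 1 2 + 1 * 0 = 1
    have hP : Mm 2 2 2 0 * Mm 1 2 0 2 = 1 := by linarith [eCB22]
    have hc20 : 1 ≤ Mm 2 2 2 0 := by
      rcases eq_or_lt_of_le (hpos 2 2 2 0) with h0 | h0
      · rw [← h0] at hP; simp at hP
      · omega
    -- eCD21 : Mm22 2 0 * Mm21 0 1 + 0 * 0 + 1 * Mm21 2 1 = Mm21 2 1
    have hd01' : Mm 2 1 0 1 = 0 := by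
      have hm : Mm 2 2 2 0 * Mm 2 1 0 1 = 0 := by linarith [eCD21]
      rcases mul_eq_zero.mp hm with h' | h'
      · omega
      · exact h'
    -- eCD22 : Mm22 2 0 * Mm21 0 2 + 0 * Mm21 1 2 + 1 * 0 = 0
    have hd02' : Mm 2 1 0 2 = 0 := by
      have hm : Mm 2 2 2 0 * Mm 2 1 0 2 = 0 := by linarith [eCD22]
      rcases mul_eq_zero.mp hm with h' | h'
      · omega
      · exact h'
    rw [hd01', hd02'] at eDB01
    -- eDB01 : 0 * Mm12 0 1 + 0 * 1 + 0 * Mm12 2 1 = Mm22 0 1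
    have hc01 : Mm 2 2 0 1 = 0 := by linarith [eDB01]
    rw [hc01] at eBC11
    -- eBC11 : Mm12 1 0 * 0 + 1 * 0 + Mm12 1 2 * 0 = 1
    linarith [eBC11]
end

section
/- Let N be either N12 = [[2,4,2],[1,2,1],[1,2,1]] or N'12 = [[2,1,1],[4,2,2],[2,1,1]]. There do not exist nine nonzero 3×3 matrices M_{ij} (i,j ∈ {1,2,3}) with nonnegative integer entries which satisfy the composition relations of k(1→2→3)/(βα), whose sum Σ_{i,j} M_{ij} equals N, and whose diagonals are as follows: the diagonal of M11 and of M12 is (1,0,0), the diagonal of M22 and of M23 is (0,1,0), the diagonal of M33 is (0,0,1), and M13, M21, M31, M32 have zero diagonal. -/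
private lemma termzero3 {A B : Matrix (Fin 3) (Fin 3) ℤ}
    (hA : ∀ a b, 0 ≤ A a b) (hB : ∀ a b, 0 ≤ B a b)
    (h : A * B = 0) (a k c : Fin 3) : A a k * B k c = 0 := by
  have he := congrFun (congrFun h a) c
  rw [Matrix.mul_apply] at he
  simp only [Matrix.zero_apply] at he
  exact (Finset.sum_eq_zero_iff_of_nonneg
    (fun i _ => mul_nonneg (hA a i) (hB i c))).mp he k (Finset.mem_univ k)

private lemma lz3 {A B : Matrix (Fin 3) (Fin 3) ℤ}
    (hA : ∀ a b, 0 ≤ A a b) (hB : ∀ a b, 0 ≤ B a b)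
    (h : A * B = 0) {a k : Fin 3} (h1 : A a k = 1) (c : Fin 3) : B k c = 0 := by
  have := termzero3 hA hB h a k c
  rwa [h1, one_mul] at this

private lemma rz3 {A B : Matrix (Fin 3) (Fin 3) ℤ}
    (hA : ∀ a b, 0 ≤ A a b) (hB : ∀ a b, 0 ≤ B a b)
    (h : A * B = 0) {k c : Fin 3} (h1 : B k c = 1) (a : Fin 3) : A a k = 0 := by
  have := termzero3 hA hB h a k c
  rwa [h1, mul_one] at this

/-- For `N` equal to `N₁₂ = [[2,4,2],[1,2,1],[1,2,1]]` or to
`N'₁₂ = [[2,1,1],[4,2,2],[2,1,1]]`, there are no nine nonzero `3×3` matrices with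
nonnegative integer entries satisfying the composition relations of
`k(1→2→3)/(βα)` (in `Fin 3` indexing: `M_{ij} • M_{st} = M_{it}` if `s = j` or
`j = s + 1`, and `0` otherwise), with sum `N` and with the prescribed diagonals. -/
theorem no_proj_functor_matrices_quiver_A3_N12 (N : Matrix (Fin 3) (Fin 3) ℤ)
    (hN : N = !![2, 4, 2; 1, 2, 1; 1, 2, 1] ∨ N = !![2, 1, 1; 4, 2, 2; 2, 1, 1]) :
    ¬ ∃ Mm : Fin 3 → Fin 3 → Matrix (Fin 3) (Fin 3) ℤ,
      (∀ i j, Mm i j ≠ 0) ∧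
      (∀ i j a b, 0 ≤ Mm i j a b) ∧
      (∀ i j s t : Fin 3,
        Mm i j * Mm s t = if s = j ∨ (j : ℕ) = (s : ℕ) + 1 then Mm i t else 0) ∧
      (Mm 0 0 + Mm 0 1 + Mm 0 2 + Mm 1 0 + Mm 1 1 + Mm 1 2 + Mm 2 0 + Mm 2 1 + Mm 2 2 =
        N) ∧
      (∀ a, Mm 0 0 a a = ![1, 0, 0] a) ∧ (∀ a, Mm 0 1 a a = ![1, 0, 0] a) ∧
      (∀ a, Mm 1 1 a a = ![0, 1, 0] a) ∧ (∀ a, Mm 1 2 a a = ![0, 1, 0] a) ∧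
      (∀ a, Mm 2 2 a a = ![0, 0, 1] a) ∧
      (∀ a, Mm 0 2 a a = 0) ∧ (∀ a, Mm 1 0 a a = 0) ∧
      (∀ a, Mm 2 0 a a = 0) ∧ (∀ a, Mm 2 1 a a = 0) := by
  rintro ⟨Mm, hnz, hpos, hrel, hsum, d00, d01, d11, d12, d22, d02, d10, d20, d21⟩
  -- diagonal facts
  have h000 : Mm 0 0 0 0 = 1 := by simpa using d00 0
  have h010 : Mm 0 1 0 0 = 1 := by simpa using d01 0
  have h011 : Mm 0 1 1 1 = 0 := by simpa using d01 1
  have h111 : Mm 1 1 1 1 = 1 := by simpa using d11 1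
  have h121 : Mm 1 2 1 1 = 1 := by simpa using d12 1
  have h222 : Mm 2 2 2 2 = 1 := by simpa using d22 2
  have h1011 : Mm 1 0 1 1 = 0 := d10 1
  -- zero composition relations
  have r00_10 : Mm 0 0 * Mm 1 0 = 0 := by have := hrel 0 0 1 0; rwa [if_neg (by decide)] at this
  have r10_11 : Mm 1 0 * Mm 1 1 = 0 := by have := hrel 1 0 1 1; rwa [if_neg (by decide)] at this
  have r10_22 : Mm 1 0 * Mm 2 2 = 0 := by have := hrel 1 0 2 2; rwa [if_neg (by decide)] at this
  have r00_20 : Mm 0 0 * Mm 2 0 = 0 := by have := hrel 0 0 2 0; rwa [if_neg (by decide)] at this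
  have r11_20 : Mm 1 1 * Mm 2 0 = 0 := by have := hrel 1 1 2 0; rwa [if_neg (by decide)] at this
  have r20_11 : Mm 2 0 * Mm 1 1 = 0 := by have := hrel 2 0 1 1; rwa [if_neg (by decide)] at this
  have r20_22 : Mm 2 0 * Mm 2 2 = 0 := by have := hrel 2 0 2 2; rwa [if_neg (by decide)] at this
  have r22_00 : Mm 2 2 * Mm 0 0 = 0 := by have := hrel 2 2 0 0; rwa [if_neg (by decide)] at this
  have r22_01 : Mm 2 2 * Mm 0 1 = 0 := by have := hrel 2 2 0 1; rwa [if_neg (by decide)] at this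
  have r02_00 : Mm 0 2 * Mm 0 0 = 0 := by have := hrel 0 2 0 0; rwa [if_neg (by decide)] at this
  have r12_00 : Mm 1 2 * Mm 0 0 = 0 := by have := hrel 1 2 0 0; rwa [if_neg (by decide)] at this
  have r11_21 : Mm 1 1 * Mm 2 1 = 0 := by have := hrel 1 1 2 1; rwa [if_neg (by decide)] at this
  have r01_22 : Mm 0 1 * Mm 2 2 = 0 := by have := hrel 0 1 2 2; rwa [if_neg (by decide)] at this
  have r00_12 : Mm 0 0 * Mm 1 2 = 0 := by have := hrel 0 0 1 2; rwa [if_neg (by decide)] at this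
  have r00_22 : Mm 0 0 * Mm 2 2 = 0 := by have := hrel 0 0 2 2; rwa [if_neg (by decide)] at this
  have r11_22 : Mm 1 1 * Mm 2 2 = 0 := by have := hrel 1 1 2 2; rwa [if_neg (by decide)] at this
  have r21_22 : Mm 2 1 * Mm 2 2 = 0 := by have := hrel 2 1 2 2; rwa [if_neg (by decide)] at this
  -- nonzero composition relations
  have p10_01 : Mm 1 0 * Mm 0 1 = Mm 1 1 := by
    have := hrel 1 0 0 1; rwa [if_pos (by decide)] at this
  have p01_12 : Mm 0 1 * Mm 1 2 = Mm 0 2 := by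
    have := hrel 0 1 1 2; rwa [if_pos (by decide)] at this
  -- zero-entry facts
  have z10r0 : ∀ c, Mm 1 0 0 c = 0 := lz3 (hpos 0 0) (hpos 1 0) r00_10 h000
  have z10c1 : ∀ a, Mm 1 0 a 1 = 0 := rz3 (hpos 1 0) (hpos 1 1) r10_11 h111
  have z10c2 : ∀ a, Mm 1 0 a 2 = 0 := rz3 (hpos 1 0) (hpos 2 2) r10_22 h222
  have z20r0 : ∀ c, Mm 2 0 0 c = 0 := lz3 (hpos 0 0) (hpos 2 0) r00_20 h000
  have z20r1 : ∀ c, Mm 2 0 1 c = 0 := lz3 (hpos 1 1) (hpos 2 0) r11_20 h111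
  have z20c1 : ∀ a, Mm 2 0 a 1 = 0 := rz3 (hpos 2 0) (hpos 1 1) r20_11 h111
  have z20c2 : ∀ a, Mm 2 0 a 2 = 0 := rz3 (hpos 2 0) (hpos 2 2) r20_22 h222
  have z00r2 : ∀ c, Mm 0 0 2 c = 0 := lz3 (hpos 2 2) (hpos 0 0) r22_00 h222
  have z22c0 : ∀ a, Mm 2 2 a 0 = 0 := rz3 (hpos 2 2) (hpos 0 0) r22_00 h000
  have z01r2 : ∀ c, Mm 0 1 2 c = 0 := lz3 (hpos 2 2) (hpos 0 1) r22_01 h222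
  have z02c0 : ∀ a, Mm 0 2 a 0 = 0 := rz3 (hpos 0 2) (hpos 0 0) r02_00 h000
  have z12c0 : ∀ a, Mm 1 2 a 0 = 0 := rz3 (hpos 1 2) (hpos 0 0) r12_00 h000
  have z21r1 : ∀ c, Mm 2 1 1 c = 0 := lz3 (hpos 1 1) (hpos 2 1) r11_21 h111
  have z01c2 : ∀ a, Mm 0 1 a 2 = 0 := rz3 (hpos 0 1) (hpos 2 2) r01_22 h222
  have z12r0 : ∀ c, Mm 1 2 0 c = 0 := lz3 (hpos 0 0) (hpos 1 2) r00_12 h000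
  have z22r0 : ∀ c, Mm 2 2 0 c = 0 := lz3 (hpos 0 0) (hpos 2 2) r00_22 h000
  have z00c2 : ∀ a, Mm 0 0 a 2 = 0 := rz3 (hpos 0 0) (hpos 2 2) r00_22 h222
  have z22r1 : ∀ c, Mm 2 2 1 c = 0 := lz3 (hpos 1 1) (hpos 2 2) r11_22 h111
  have z11c2 : ∀ a, Mm 1 1 a 2 = 0 := rz3 (hpos 1 1) (hpos 2 2) r11_22 h222
  have z21c2 : ∀ a, Mm 2 1 a 2 = 0 := rz3 (hpos 2 1) (hpos 2 2) r21_22 h222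
  rcases hN with hN | hN <;> subst hN
  · -- N₁₂ : use entries (1,0) and (2,0)
    have s10 := congrFun (congrFun hsum 1) 0
    have s20 := congrFun (congrFun hsum 2) 0
    simp only [Matrix.add_apply] at s10 s20
    norm_num [Matrix.cons_val_zero, Matrix.cons_val_one, Matrix.head_cons,
      Matrix.head_fin_const, Matrix.vecHead, Matrix.vecTail, Matrix.cons_val_two] at s10 s20
    -- product entry: Mm 1 0 1 0 = Mm 1 1 1 0
    have hgi := congrFun (congrFun p10_01 1) 0
    rw [Matrix.mul_apply, Fin.sum_univ_three, h1011, z10c2 1] at hgi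
    rw [h010] at hgi
    simp only [mul_one, zero_mul, add_zero, zero_add] at hgi
    -- M20 nonzero forces entry (2,0) nonzero
    have hn : Mm 2 0 2 0 ≠ 0 := by
      intro e
      apply hnz 2 0
      ext a b
      fin_cases a <;> fin_cases b <;> simp only [Matrix.zero_apply] <;>
        first
          | exact z20r0 _ | exact z20r1 _ | exact z20c1 _ | exact z20c2 _ | exact e
    -- M10 nonzero forces (1,0) or (2,0) entry nonzero
    have hm : Mm 1 0 1 0 ≠ 0 ∨ Mm 1 0 2 0 ≠ 0 := by
      by_contra hc
      push_neg at hc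
      obtain ⟨e1, e2⟩ := hc
      apply hnz 1 0
      ext a b
      fin_cases a <;> fin_cases b <;> simp only [Matrix.zero_apply] <;>
        first
          | exact z10r0 _ | exact z10c1 _ | exact z10c2 _ | exact e1 | exact e2
    have n1 := hpos 0 0 1 0
    have n2 := hpos 0 1 1 0
    have n3 := hpos 1 0 1 0
    have n4 := hpos 1 1 1 0
    have n5 := hpos 1 0 2 0
    have n6 := hpos 1 1 2 0
    have n7 := hpos 2 0 2 0
    have n8 := hpos 2 1 2 0
    have e1 := z02c0 1
    have e2 := z12c0 1
    have e3 := z20r1 0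
    have e4 := z21r1 0
    have e5 := z22c0 1
    have f1 := z00r2 0
    have f2 := z01r2 0
    have f3 := z02c0 2
    have f4 := z12c0 2
    have f5 := z22c0 2
    rcases hm with e | e <;> omega
  · -- N'₁₂ : use entries (0,2) and (1,2)
    have s02 := congrFun (congrFun hsum 0) 2
    have s12 := congrFun (congrFun hsum 1) 2
    simp only [Matrix.add_apply] at s02 s12
    norm_num [Matrix.cons_val_zero, Matrix.cons_val_one, Matrix.head_cons,
      Matrix.head_fin_const, Matrix.vecHead, Matrix.vecTail, Matrix.cons_val_two] at s02 s12
    -- product entries of M01 * M12 = M02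
    have hble := congrFun (congrFun p01_12 0) 2
    rw [Matrix.mul_apply, Fin.sum_univ_three, z12r0 2, z01c2 0] at hble
    simp only [mul_zero, zero_mul, zero_add, add_zero] at hble
    -- hble : Mm 0 1 0 1 * Mm 1 2 1 2 = Mm 0 2 0 2
    have hf := congrFun (congrFun p01_12 1) 2
    rw [Matrix.mul_apply, Fin.sum_univ_three, z12r0 2, h011, z01c2 1] at hf
    simp only [mul_zero, zero_mul, zero_add, add_zero] at hf
    -- hf : 0 = Mm 0 2 1 2
    have e1 := z00c2 0
    have e2 := z01c2 0
    have e3 := z10c2 0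
    have e4 := z11c2 0
    have e5 := z12r0 2
    have e6 := z20r0 2
    have e7 := z21c2 0
    have e8 := z22r0 2
    have f1 := z00c2 1
    have f2 := z01c2 1
    have f3 := z10c2 1
    have f4 := z11c2 1
    have f5 := z20r1 2
    have f6 := z21c2 1
    have f7 := z22r1 2
    have he : Mm 0 2 0 2 = 1 := by omega
    have hl : Mm 1 2 1 2 = 2 := by omega
    rw [he, hl] at hble
    omega
end

section
/- Let M_{ij} (i,j ∈ {1,2,3}) be nine nonzero 3×3 matrices with nonnegative integer entries which satisfy the composition relations of k(1→2→3)/(βα), whose sum Σ_{i,j} M_{ij} equals N13 = [[2,2,1],[2,2,1],[2,2,1]], and whose diagonals are as follows: the diagonal of M11 and of M12 is (1,0,0), the diagonal of M22 and of M23 is (0,1,0), the diagonal of M33 is (0,0,1), and M13, M21, M31, M32 have zero diagonal. Then necessarily M11 = [[1,0,0],[0,0,0],[0,0,0]], M12 = [[1,1,0],[0,0,0],[0,0,0]], M13 = [[0,1,1],[0,0,0],[0,0,0]], M21 = [[0,0,0],[1,0,0],[0,0,0]], M22 = [[0,0,0],[1,1,0],[0,0,0]], M23 = [[0,0,0],[0,1,1],[0,0,0]],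 M31 = [[0,0,0],[0,0,0],[1,0,0]], M32 = [[0,0,0],[0,0,0],[1,1,0]], and M33 = [[0,0,0],[0,0,0],[0,1,1]]. -/
private lemma mulE (A B : Matrix (Fin 3) (Fin 3) ℤ) (a b : Fin 3) :
    (A * B) a b = A a 0 * B 0 b + A a 1 * B 1 b + A a 2 * B 2 b := by
  rw [Matrix.mul_apply, Fin.sum_univ_three]

set_option maxHeartbeats 4000000 in
/-- If nine nonzero `3×3` matrices with nonnegative integer entries satisfy the
composition relations of `k(1→2→3)/(βα)` (in `Fin 3` indexing:
`M_{ij} • M_{st} = M_{it}` if `s = j` or `j = s + 1`, and `0` otherwise), add up to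
`N₁₃ = [[2,2,1],[2,2,1],[2,2,1]]` and have the prescribed diagonals, then they are the
explicit matrices below. -/
theorem proj_functor_matrices_quiver_A3_N13 (Mm : Fin 3 → Fin 3 → Matrix (Fin 3) (Fin 3) ℤ)
    (hnz : ∀ i j, Mm i j ≠ 0)
    (hnn : ∀ i j a b, 0 ≤ Mm i j a b)
    (hrel : ∀ i j s t : Fin 3,
      Mm i j * Mm s t = if s = j ∨ (j : ℕ) = (s : ℕ) + 1 then Mm i t else 0)
    (hsum : Mm 0 0 + Mm 0 1 + Mm 0 2 + Mm 1 0 + Mm 1 1 + Mm 1 2 +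
      Mm 2 0 + Mm 2 1 + Mm 2 2 = !![2, 2, 1; 2, 2, 1; 2, 2, 1])
    (hd11 : ∀ a, Mm 0 0 a a = ![1, 0, 0] a) (hd12 : ∀ a, Mm 0 1 a a = ![1, 0, 0] a)
    (hd22 : ∀ a, Mm 1 1 a a = ![0, 1, 0] a) (hd23 : ∀ a, Mm 1 2 a a = ![0, 1, 0] a)
    (hd33 : ∀ a, Mm 2 2 a a = ![0, 0, 1] a)
    (hd13 : ∀ a, Mm 0 2 a a = 0) (hd21 : ∀ a, Mm 1 0 a a = 0)
    (hd31 : ∀ a, Mm 2 0 a a = 0) (hd32 : ∀ a, Mm 2 1 a a = 0) :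
    Mm 0 0 = !![1, 0, 0; 0, 0, 0; 0, 0, 0] ∧
    Mm 0 1 = !![1, 1, 0; 0, 0, 0; 0, 0, 0] ∧
    Mm 0 2 = !![0, 1, 1; 0, 0, 0; 0, 0, 0] ∧
    Mm 1 0 = !![0, 0, 0; 1, 0, 0; 0, 0, 0] ∧
    Mm 1 1 = !![0, 0, 0; 1, 1, 0; 0, 0, 0] ∧
    Mm 1 2 = !![0, 0, 0; 0, 1, 1; 0, 0, 0] ∧
    Mm 2 0 = !![0, 0, 0; 0, 0, 0; 1, 0, 0] ∧
    Mm 2 1 = !![0, 0, 0; 0, 0, 0; 1, 1, 0] ∧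
    Mm 2 2 = !![0, 0, 0; 0, 0, 0; 0, 1, 1] := by
  have A00 : Mm 0 0 0 0 = 1 := by simpa using hd11 0
  have A11 : Mm 0 0 1 1 = 0 := by simpa using hd11 1
  have A22 : Mm 0 0 2 2 = 0 := by simpa using hd11 2
  have B00 : Mm 0 1 0 0 = 1 := by simpa using hd12 0
  have B11 : Mm 0 1 1 1 = 0 := by simpa using hd12 1
  have B22 : Mm 0 1 2 2 = 0 := by simpa using hd12 2
  have C00 : Mm 0 2 0 0 = 0 := by simpa using hd13 0
  have C11 : Mm 0 2 1 1 = 0 := by simpa using hd13 1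
  have C22 : Mm 0 2 2 2 = 0 := by simpa using hd13 2
  have D00 : Mm 1 0 0 0 = 0 := by simpa using hd21 0
  have D11 : Mm 1 0 1 1 = 0 := by simpa using hd21 1
  have D22 : Mm 1 0 2 2 = 0 := by simpa using hd21 2
  have E00 : Mm 1 1 0 0 = 0 := by simpa using hd22 0
  have E11 : Mm 1 1 1 1 = 1 := by simpa using hd22 1
  have E22 : Mm 1 1 2 2 = 0 := by simpa using hd22 2
  have F00 : Mm 1 2 0 0 = 0 := by simpa using hd23 0
  have F11 : Mm 1 2 1 1 = 1 := by simpa using hd23 1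
  have F22 : Mm 1 2 2 2 = 0 := by simpa using hd23 2
  have G00 : Mm 2 0 0 0 = 0 := by simpa using hd31 0
  have G11 : Mm 2 0 1 1 = 0 := by simpa using hd31 1
  have G22 : Mm 2 0 2 2 = 0 := by simpa using hd31 2
  have H00 : Mm 2 1 0 0 = 0 := by simpa using hd32 0
  have H11 : Mm 2 1 1 1 = 0 := by simpa using hd32 1
  have H22 : Mm 2 1 2 2 = 0 := by simpa using hd32 2
  have K00 : Mm 2 2 0 0 = 0 := by simpa using hd33 0
  have K11 : Mm 2 2 1 1 = 0 := by simpa using hd33 1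
  have K22 : Mm 2 2 2 2 = 1 := by simpa using hd33 2
  have rAE : Mm 0 0 * Mm 1 1 = 0 := (hrel 0 0 1 1).trans (if_neg (by decide))
  have rAK : Mm 0 0 * Mm 2 2 = 0 := (hrel 0 0 2 2).trans (if_neg (by decide))
  have rEK : Mm 1 1 * Mm 2 2 = 0 := (hrel 1 1 2 2).trans (if_neg (by decide))
  have rKK : Mm 2 2 * Mm 2 2 = Mm 2 2 := (hrel 2 2 2 2).trans (if_pos (by decide))
  have rKA : Mm 2 2 * Mm 0 0 = 0 := (hrel 2 2 0 0).trans (if_neg (by decide))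
  have rAA : Mm 0 0 * Mm 0 0 = Mm 0 0 := (hrel 0 0 0 0).trans (if_pos (by decide))
  have rFA : Mm 1 2 * Mm 0 0 = 0 := (hrel 1 2 0 0).trans (if_neg (by decide))
  have rCA : Mm 0 2 * Mm 0 0 = 0 := (hrel 0 2 0 0).trans (if_neg (by decide))
  have rDA : Mm 1 0 * Mm 0 0 = Mm 1 0 := (hrel 1 0 0 0).trans (if_pos (by decide))
  have rBA : Mm 0 1 * Mm 0 0 = Mm 0 0 := (hrel 0 1 0 0).trans (if_pos (by decide))
  have rEA : Mm 1 1 * Mm 0 0 = Mm 1 0 := (hrel 1 1 0 0).trans (if_pos (by decide))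
  have rGA : Mm 2 0 * Mm 0 0 = Mm 2 0 := (hrel 2 0 0 0).trans (if_pos (by decide))
  have rHA : Mm 2 1 * Mm 0 0 = Mm 2 0 := (hrel 2 1 0 0).trans (if_pos (by decide))
  have rEG : Mm 1 1 * Mm 2 0 = 0 := (hrel 1 1 2 0).trans (if_neg (by decide))
  have rDB : Mm 1 0 * Mm 0 1 = Mm 1 1 := (hrel 1 0 0 1).trans (if_pos (by decide))
  have rBB : Mm 0 1 * Mm 0 1 = Mm 0 1 := (hrel 0 1 0 1).trans (if_pos (by decide))
  have rKF : Mm 2 2 * Mm 1 2 = Mm 2 2 := (hrel 2 2 1 2).trans (if_pos (by decide))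
  have rFD : Mm 1 2 * Mm 1 0 = Mm 1 0 := (hrel 1 2 1 0).trans (if_pos (by decide))
  have rFF : Mm 1 2 * Mm 1 2 = Mm 1 2 := (hrel 1 2 1 2).trans (if_pos (by decide))
  have rFG : Mm 1 2 * Mm 2 0 = Mm 1 0 := (hrel 1 2 2 0).trans (if_pos (by decide))
  have rHB : Mm 2 1 * Mm 0 1 = Mm 2 1 := (hrel 2 1 0 1).trans (if_pos (by decide))
  have rKE : Mm 2 2 * Mm 1 1 = Mm 2 1 := (hrel 2 2 1 1).trans (if_pos (by decide))
  have rCE : Mm 0 2 * Mm 1 1 = Mm 0 1 := (hrel 0 2 1 1).trans (if_pos (by decide))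
  have rCK : Mm 0 2 * Mm 2 2 = Mm 0 2 := (hrel 0 2 2 2).trans (if_pos (by decide))
  have erAE_01 := congrFun (congrFun rAE 0) 1
  rw [mulE] at erAE_01
  simp only [Matrix.zero_apply, A00, E11, one_mul, mul_one, zero_mul, mul_zero, add_zero, zero_add] at erAE_01
  have E01 : Mm 1 1 0 1 = 0 := by linarith [erAE_01, hnn 0 0 0 1, hnn 1 1 0 1, mul_nonneg (hnn 0 0 0 2) (hnn 1 1 2 1), hnn 1 1 0 1]
  have A01 : Mm 0 0 0 1 = 0 := by linarith [erAE_01, hnn 0 0 0 1, hnn 1 1 0 1, mul_nonneg (hnn 0 0 0 2) (hnn 1 1 2 1), hnn 0 0 0 1]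
  have erAK_02 := congrFun (congrFun rAK 0) 2
  rw [mulE] at erAK_02
  simp only [Matrix.zero_apply, A00, A01, K22, one_mul, mul_one, zero_mul, mul_zero, add_zero, zero_add] at erAK_02
  have K02 : Mm 2 2 0 2 = 0 := by linarith [erAK_02, hnn 2 2 0 2, hnn 0 0 0 2, hnn 2 2 0 2]
  have A02 : Mm 0 0 0 2 = 0 := by linarith [erAK_02, hnn 2 2 0 2, hnn 0 0 0 2, hnn 0 0 0 2]
  have erEK_12 := congrFun (congrFun rEK 1) 2
  rw [mulE] at erEK_12
  simp only [Matrix.zero_apply, K02, E11, K22, one_mul, mul_one, zero_mul, mul_zero, add_zero, zero_add] at erEK_12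
  have K12 : Mm 2 2 1 2 = 0 := by linarith [erEK_12, hnn 2 2 1 2, hnn 1 1 1 2, hnn 2 2 1 2]
  have E12 : Mm 1 1 1 2 = 0 := by linarith [erEK_12, hnn 2 2 1 2, hnn 1 1 1 2, hnn 1 1 1 2]
  have erEK_02 := congrFun (congrFun rEK 0) 2
  rw [mulE] at erEK_02
  simp only [Matrix.zero_apply, E00, K02, E01, K12, K22, one_mul, mul_one, zero_mul, mul_zero, add_zero, zero_add] at erEK_02
  have E02 : Mm 1 1 0 2 = 0 := by linarith [erEK_02, hnn 1 1 0 2, hnn 1 1 0 2]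
  have erKK_01 := congrFun (congrFun rKK 0) 1
  rw [mulE] at erKK_01
  simp only [K00, K11, K02, one_mul, mul_one, zero_mul, mul_zero, add_zero, zero_add] at erKK_01
  have K01 : Mm 2 2 0 1 = 0 := by linarith [erKK_01, hnn 2 2 0 1, hnn 2 2 0 1]
  have erKK_10 := congrFun (congrFun rKK 1) 0
  rw [mulE] at erKK_10
  simp only [K00, K11, K12, one_mul, mul_one, zero_mul, mul_zero, add_zero, zero_add] at erKK_10
  have K10 : Mm 2 2 1 0 = 0 := by linarith [erKK_10, hnn 2 2 1 0, hnn 2 2 1 0]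
  have erKA_20 := congrFun (congrFun rKA 2) 0
  rw [mulE] at erKA_20
  simp only [Matrix.zero_apply, A00, K22, one_mul, mul_one, zero_mul, mul_zero, add_zero, zero_add] at erKA_20
  have K20 : Mm 2 2 2 0 = 0 := by linarith [erKA_20, hnn 2 2 2 0, hnn 0 0 2 0, mul_nonneg (hnn 2 2 2 1) (hnn 0 0 1 0), hnn 2 2 2 0]
  have A20 : Mm 0 0 2 0 = 0 := by linarith [erKA_20, hnn 2 2 2 0, hnn 0 0 2 0, mul_nonneg (hnn 2 2 2 1) (hnn 0 0 1 0), hnn 0 0 2 0]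
  have erAA_12 := congrFun (congrFun rAA 1) 2
  rw [mulE] at erAA_12
  simp only [A02, A11, A22, one_mul, mul_one, zero_mul, mul_zero, add_zero, zero_add] at erAA_12
  have A12 : Mm 0 0 1 2 = 0 := by linarith [erAA_12, hnn 0 0 1 2, hnn 0 0 1 2]
  have erAA_21 := congrFun (congrFun rAA 2) 1
  rw [mulE] at erAA_21
  simp only [A20, A01, A11, A22, one_mul, mul_one, zero_mul, mul_zero, add_zero, zero_add] at erAA_21
  have A21 : Mm 0 0 2 1 = 0 := by linarith [erAA_21, hnn 0 0 2 1, hnn 0 0 2 1]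
  have erFA_10 := congrFun (congrFun rFA 1) 0
  rw [mulE] at erFA_10
  simp only [Matrix.zero_apply, A00, F11, A20, one_mul, mul_one, zero_mul, mul_zero, add_zero, zero_add] at erFA_10
  have F10 : Mm 1 2 1 0 = 0 := by linarith [erFA_10, hnn 1 2 1 0, hnn 0 0 1 0, hnn 1 2 1 0]
  have A10 : Mm 0 0 1 0 = 0 := by linarith [erFA_10, hnn 1 2 1 0, hnn 0 0 1 0, hnn 0 0 1 0]
  have erFA_20 := congrFun (congrFun rFA 2) 0
  rw [mulE] at erFA_20
  simp only [Matrix.zero_apply, A00, A10, F22, A20, one_mul, mul_one, zero_mul, mul_zero, add_zero, zero_add] at erFA_20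
  have F20 : Mm 1 2 2 0 = 0 := by linarith [erFA_20, hnn 1 2 2 0, hnn 1 2 2 0]
  have erCA_10 := congrFun (congrFun rCA 1) 0
  rw [mulE] at erCA_10
  simp only [Matrix.zero_apply, A00, C11, A10, A20, one_mul, mul_one, zero_mul, mul_zero, add_zero, zero_add] at erCA_10
  have C10 : Mm 0 2 1 0 = 0 := by linarith [erCA_10, hnn 0 2 1 0, hnn 0 2 1 0]
  have erCA_20 := congrFun (congrFun rCA 2) 0
  rw [mulE] at erCA_20
  simp only [Matrix.zero_apply, A00, A10, C22, A20, one_mul, mul_one, zero_mul, mul_zero, add_zero, zero_add] at erCA_20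
  have C20 : Mm 0 2 2 0 = 0 := by linarith [erCA_20, hnn 0 2 2 0, hnn 0 2 2 0]
  have erDA_01 := congrFun (congrFun rDA 0) 1
  rw [mulE] at erDA_01
  simp only [D00, A01, A11, A21, one_mul, mul_one, zero_mul, mul_zero, add_zero, zero_add] at erDA_01
  have D01 : Mm 1 0 0 1 = 0 := by linarith [erDA_01, hnn 1 0 0 1, hnn 1 0 0 1]
  have erDA_21 := congrFun (congrFun rDA 2) 1
  rw [mulE] at erDA_21
  simp only [A01, A11, D22, A21, one_mul, mul_one, zero_mul, mul_zero, add_zero, zero_add] at erDA_21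
  have D21 : Mm 1 0 2 1 = 0 := by linarith [erDA_21, hnn 1 0 2 1, hnn 1 0 2 1]
  have erDA_02 := congrFun (congrFun rDA 0) 2
  rw [mulE] at erDA_02
  simp only [D00, A02, D01, A12, A22, one_mul, mul_one, zero_mul, mul_zero, add_zero, zero_add] at erDA_02
  have D02 : Mm 1 0 0 2 = 0 := by linarith [erDA_02, hnn 1 0 0 2, hnn 1 0 0 2]
  have erDA_12 := congrFun (congrFun rDA 1) 2
  rw [mulE] at erDA_12
  simp only [A02, D11, A12, A22, one_mul, mul_one, zero_mul, mul_zero, add_zero, zero_add] at erDA_12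
  have D12 : Mm 1 0 1 2 = 0 := by linarith [erDA_12, hnn 1 0 1 2, hnn 1 0 1 2]
  have erBA_10 := congrFun (congrFun rBA 1) 0
  rw [mulE] at erBA_10
  simp only [A00, B11, A10, A20, A10, one_mul, mul_one, zero_mul, mul_zero, add_zero, zero_add] at erBA_10
  have B10 : Mm 0 1 1 0 = 0 := by linarith [erBA_10, hnn 0 1 1 0, hnn 0 1 1 0]
  have erBA_20 := congrFun (congrFun rBA 2) 0
  rw [mulE] at erBA_20
  simp only [A00, A10, B22, A20, A20, one_mul, mul_one, zero_mul, mul_zero, add_zero, zero_add] at erBA_20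
  have B20 : Mm 0 1 2 0 = 0 := by linarith [erBA_20, hnn 0 1 2 0, hnn 0 1 2 0]
  have erGA_01 := congrFun (congrFun rGA 0) 1
  rw [mulE] at erGA_01
  simp only [G00, A01, A11, A21, one_mul, mul_one, zero_mul, mul_zero, add_zero, zero_add] at erGA_01
  have G01 : Mm 2 0 0 1 = 0 := by linarith [erGA_01, hnn 2 0 0 1, hnn 2 0 0 1]
  have erGA_21 := congrFun (congrFun rGA 2) 1
  rw [mulE] at erGA_21
  simp only [A01, A11, G22, A21, one_mul, mul_one, zero_mul, mul_zero, add_zero, zero_add] at erGA_21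
  have G21 : Mm 2 0 2 1 = 0 := by linarith [erGA_21, hnn 2 0 2 1, hnn 2 0 2 1]
  have erGA_02 := congrFun (congrFun rGA 0) 2
  rw [mulE] at erGA_02
  simp only [G00, A02, G01, A12, A22, one_mul, mul_one, zero_mul, mul_zero, add_zero, zero_add] at erGA_02
  have G02 : Mm 2 0 0 2 = 0 := by linarith [erGA_02, hnn 2 0 0 2, hnn 2 0 0 2]
  have erGA_12 := congrFun (congrFun rGA 1) 2
  rw [mulE] at erGA_12
  simp only [A02, G11, A12, A22, one_mul, mul_one, zero_mul, mul_zero, add_zero, zero_add] at erGA_12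
  have G12 : Mm 2 0 1 2 = 0 := by linarith [erGA_12, hnn 2 0 1 2, hnn 2 0 1 2]
  have erEG_10 := congrFun (congrFun rEG 1) 0
  rw [mulE] at erEG_10
  simp only [Matrix.zero_apply, G00, E11, E12, one_mul, mul_one, zero_mul, mul_zero, add_zero, zero_add] at erEG_10
  have G10 : Mm 2 0 1 0 = 0 := by linarith [erEG_10, hnn 2 0 1 0, hnn 2 0 1 0]
  have erHA_10 := congrFun (congrFun rHA 1) 0
  rw [mulE] at erHA_10
  simp only [A00, H11, A10, A20, G10, one_mul, mul_one, zero_mul, mul_zero, add_zero, zero_add] at erHA_10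
  have H10 : Mm 2 1 1 0 = 0 := by linarith [erHA_10, hnn 2 1 1 0, hnn 2 1 1 0]
  have eH20G20 := congrFun (congrFun rHA 2) 0
  rw [mulE] at eH20G20
  simp only [A00, A10, A20, H22, one_mul, mul_one, zero_mul, mul_zero, add_zero, zero_add] at eH20G20
  have eEA10 := congrFun (congrFun rEA 1) 0
  rw [mulE] at eEA10
  simp only [A00, A10, A20, one_mul, mul_one, zero_mul, mul_zero, add_zero, zero_add] at eEA10
  have eEA20 := congrFun (congrFun rEA 2) 0
  rw [mulE] at eEA20
  simp only [A00, A10, A20, one_mul, mul_one, zero_mul, mul_zero, add_zero, zero_add] at eEA20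
  have eDB11 := congrFun (congrFun rDB 1) 1
  rw [mulE] at eDB11
  simp only [D11, D12, B11, E11, one_mul, mul_one, zero_mul, mul_zero, add_zero, zero_add] at eDB11
  have hDB1 : Mm 1 0 1 0 * Mm 0 1 0 1 = 1 := by linarith [eDB11]
  have hpair : Mm 1 0 1 0 = 1 ∧ Mm 0 1 0 1 = 1 := by
    rcases Int.mul_eq_one_iff_eq_one_or_neg_one.mp hDB1 with ⟨h1, h2⟩ | ⟨h1, h2⟩
    · exact ⟨h1, h2⟩
    · exfalso; linarith [hnn 1 0 1 0]
  obtain ⟨D10, B01⟩ := hpair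
  have E10 : Mm 1 1 1 0 = 1 := by rw [eEA10, D10]
  have erDB_12 := congrFun (congrFun rDB 1) 2
  rw [mulE] at erDB_12
  simp only [D10, D11, D12, B22, E12, one_mul, mul_one, zero_mul, mul_zero, add_zero, zero_add] at erDB_12
  have B02 : Mm 0 1 0 2 = 0 := by linarith [erDB_12, hnn 0 1 0 2, hnn 0 1 0 2]
  have eDB21 := congrFun (congrFun rDB 2) 1
  rw [mulE] at eDB21
  simp only [B01, D21, B11, D22, one_mul, mul_one, zero_mul, mul_zero, add_zero, zero_add] at eDB21
  have erBB_12 := congrFun (congrFun rBB 1) 2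
  rw [mulE] at erBB_12
  simp only [B10, B02, B11, B22, one_mul, mul_one, zero_mul, mul_zero, add_zero, zero_add] at erBB_12
  have B12 : Mm 0 1 1 2 = 0 := by linarith [erBB_12, hnn 0 1 1 2, hnn 0 1 1 2]
  have erBB_21 := congrFun (congrFun rBB 2) 1
  rw [mulE] at erBB_21
  simp only [B20, B01, B11, B22, one_mul, mul_one, zero_mul, mul_zero, add_zero, zero_add] at erBB_21
  have B21 : Mm 0 1 2 1 = 0 := by linarith [erBB_21, hnn 0 1 2 1, hnn 0 1 2 1]
  have erKF_21 := congrFun (congrFun rKF 2) 1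
  rw [mulE] at erKF_21
  simp only [K20, F11, K22, one_mul, mul_one, zero_mul, mul_zero, add_zero, zero_add] at erKF_21
  have F21 : Mm 1 2 2 1 = 0 := by linarith [erKF_21, hnn 1 2 2 1, hnn 1 2 2 1]
  have erFD_20 := congrFun (congrFun rFD 2) 0
  rw [mulE] at erFD_20
  simp only [F20, D00, F21, D10, F22, one_mul, mul_one, zero_mul, mul_zero, add_zero, zero_add] at erFD_20
  have D20 : Mm 1 0 2 0 = 0 := by linarith [erFD_20, hnn 1 0 2 0, hnn 1 0 2 0]
  have E20 : Mm 1 1 2 0 = 0 := by rw [eEA20, D20]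
  have E21 : Mm 1 1 2 1 = 0 := by rw [← eDB21, D20]
  have H20 : Mm 2 1 2 0 = Mm 2 0 2 0 := eH20G20
  have erFD_00 := congrFun (congrFun rFD 0) 0
  rw [mulE] at erFD_00
  simp only [F00, D00, D10, D20, D00, one_mul, mul_one, zero_mul, mul_zero, add_zero, zero_add] at erFD_00
  have F01 : Mm 1 2 0 1 = 0 := by linarith [erFD_00, hnn 1 2 0 1, hnn 1 2 0 1]
  have erFF_02 := congrFun (congrFun rFF 0) 2
  rw [mulE] at erFF_02
  simp only [F00, F01, F22, one_mul, mul_one, zero_mul, mul_zero, add_zero, zero_add] at erFF_02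
  have F02 : Mm 1 2 0 2 = 0 := by linarith [erFF_02, hnn 1 2 0 2, hnn 1 2 0 2]
  have eFG10 := congrFun (congrFun rFG 1) 0
  rw [mulE] at eFG10
  simp only [F10, F11, G00, G10, D10, one_mul, mul_one, zero_mul, mul_zero, add_zero, zero_add] at eFG10
  have hFG1 : Mm 1 2 1 2 * Mm 2 0 2 0 = 1 := by linarith [eFG10]
  have hpair2 : Mm 1 2 1 2 = 1 ∧ Mm 2 0 2 0 = 1 := by
    rcases Int.mul_eq_one_iff_eq_one_or_neg_one.mp hFG1 with ⟨h1, h2⟩ | ⟨h1, h2⟩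
    · exact ⟨h1, h2⟩
    · exfalso; linarith [hnn 1 2 1 2]
  obtain ⟨F12, G20⟩ := hpair2
  have H20v : Mm 2 1 2 0 = 1 := by rw [H20, G20]
  have erHB_01 := congrFun (congrFun rHB 0) 1
  rw [mulE] at erHB_01
  simp only [H00, B01, B11, B21, one_mul, mul_one, zero_mul, mul_zero, add_zero, zero_add] at erHB_01
  have H01 : Mm 2 1 0 1 = 0 := by linarith [erHB_01, hnn 2 1 0 1, hnn 2 1 0 1]
  have erHB_21 := congrFun (congrFun rHB 2) 1
  rw [mulE] at erHB_21
  simp only [H20v, B01, B11, H22, B21, one_mul, mul_one, zero_mul, mul_zero, add_zero, zero_add] at erHB_21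
  have H21 : Mm 2 1 2 1 = 1 := by linarith [erHB_21, hnn 2 1 2 1, hnn 2 1 2 1]
  have erHB_02 := congrFun (congrFun rHB 0) 2
  rw [mulE] at erHB_02
  simp only [H00, B02, H01, B12, B22, one_mul, mul_one, zero_mul, mul_zero, add_zero, zero_add] at erHB_02
  have H02 : Mm 2 1 0 2 = 0 := by linarith [erHB_02, hnn 2 1 0 2, hnn 2 1 0 2]
  have erHB_12 := congrFun (congrFun rHB 1) 2
  rw [mulE] at erHB_12
  simp only [H10, B02, H11, B12, B22, one_mul, mul_one, zero_mul, mul_zero, add_zero, zero_add] at erHB_12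
  have H12 : Mm 2 1 1 2 = 0 := by linarith [erHB_12, hnn 2 1 1 2, hnn 2 1 1 2]
  have erKE_20 := congrFun (congrFun rKE 2) 0
  rw [mulE] at erKE_20
  simp only [K20, E00, E10, K22, E20, H20v, one_mul, mul_one, zero_mul, mul_zero, add_zero, zero_add] at erKE_20
  have K21 : Mm 2 2 2 1 = 1 := by linarith [erKE_20, hnn 2 2 2 1, hnn 2 2 2 1]
  have erCE_00 := congrFun (congrFun rCE 0) 0
  rw [mulE] at erCE_00
  simp only [C00, E00, E10, E20, B00, one_mul, mul_one, zero_mul, mul_zero, add_zero, zero_add] at erCE_00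
  have C01 : Mm 0 2 0 1 = 1 := by linarith [erCE_00, hnn 0 2 0 1, hnn 0 2 0 1]
  have erCE_20 := congrFun (congrFun rCE 2) 0
  rw [mulE] at erCE_20
  simp only [C20, E00, E10, C22, E20, B20, one_mul, mul_one, zero_mul, mul_zero, add_zero, zero_add] at erCE_20
  have C21 : Mm 0 2 2 1 = 0 := by linarith [erCE_20, hnn 0 2 2 1, hnn 0 2 2 1]
  have erCK_01 := congrFun (congrFun rCK 0) 1
  rw [mulE] at erCK_01
  simp only [C00, K01, C01, K11, K21, C01, one_mul, mul_one, zero_mul, mul_zero, add_zero, zero_add] at erCK_01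
  have C02 : Mm 0 2 0 2 = 1 := by linarith [erCK_01, hnn 0 2 0 2, hnn 0 2 0 2]
  have erCK_11 := congrFun (congrFun rCK 1) 1
  rw [mulE] at erCK_11
  simp only [C10, K01, C11, K11, K21, C11, one_mul, mul_one, zero_mul, mul_zero, add_zero, zero_add] at erCK_11
  have C12 : Mm 0 2 1 2 = 0 := by linarith [erCK_11, hnn 0 2 1 2, hnn 0 2 1 2]
  refine ⟨?_, ?_, ?_, ?_, ?_, ?_, ?_, ?_, ?_⟩ <;>
    · ext a b
      fin_cases a <;> fin_cases b <;> simp [Matrix.vecHead, Matrix.vecTail, A00, A01, A02, A10, A11, A12, A20, A21, A22, B00, B01, B02, B10, B11, B12, B20, B21, B22, C00, C01, C02, C10, C11, C12, C20, C21, C22, D00, D01, D02, D10, D11, D12, D20, D21, D22, E00, E01, E02, E10, E11, E12, E20, E21, E22, F00, F01, F02, F10, F11, F12, F20, F21, F22, G00, G01, G02, G10, G11, G12, G20, G21, G22, H00, H01, H02, H10, H11, H12, H20v, H21, H22, K00, K01, K02, K10, K11, K12, K20, K21, K22]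
end
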